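/- arXiv:math/0702828 — 7 statements merged into one kernel-verified Lean document; each statement's English description precedes it below -/
import Mathlib

section
/- In the setting λ₀ = λ₁ = 0 with P⁰, P¹ positive adapted processes on a finite filtered probability space, a pair of positive random variables (ρ⁰, ρ¹) is a price system if and only if dQ/dP := ρ⁰(T)/P⁰(0) defines a probability measure Q equivalent to P under which P̂(k) = P¹(k)/P⁰(k) is a martingale and ρ¹ = ρ⁰ P̂(T). -/
open MeasureTheory
open scoped ENNReal NNReal

theorem stmt8 {Ω : Type*} [Fintype Ω] {m : MeasurableSpace Ω} [MeasurableSingletonClass Ω]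
    (P : Measure Ω) [IsProbabilityMeasure P]
    (ℱ : Filtration ℕ m) (T : ℕ)
    (P0 P1 : ℕ → Ω → ℝ) (hP0pos : ∀ k ω, 0 < P0 k ω) (hP1pos : ∀ k ω, 0 < P1 k ω)
    (hP0adapt : Adapted ℱ P0) (hP1adapt : Adapted ℱ P1)
    (P00 : ℝ) (hP00 : 0 < P00) (hP0init : ∀ ω, P0 0 ω = P00)
    (Phat : ℕ → Ω → ℝ) (hPhat : ∀ k ω, Phat k ω = P1 k ω / P0 k ω)
    (ρ0 ρ1 : Ω → ℝ) (hρ0pos : ∀ ω, 0 < ρ0 ω) (hρ1pos : ∀ ω, 0 < ρ1 ω)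
    (hρ0meas : StronglyMeasurable[ℱ T] ρ0) (hρ1meas : StronglyMeasurable[ℱ T] ρ1)
    (Q : Measure Ω) (hQ : Q = P.withDensity (fun ω => ENNReal.ofReal (ρ0 ω / P00))) :
    ((∫ ω, ρ0 ω ∂P = P00) ∧
      ∀ k ≤ T, (P[ρ1 | ℱ k]) =ᵐ[P] fun ω => (P[ρ0 | ℱ k]) ω * Phat k ω)
    ↔
    (IsProbabilityMeasure Q ∧ Q ≪ P ∧ P ≪ Q ∧
      (∀ k ≤ T, (Q[Phat T | ℱ k]) =ᵐ[Q] Phat k) ∧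
      ρ1 =ᵐ[P] fun ω => ρ0 ω * Phat T ω) := by
  -- basic facts
  have hQuniv : Q Set.univ = ENNReal.ofReal (∫ ω, ρ0 ω / P00 ∂P) := by
    rw [hQ, withDensity_apply _ MeasurableSet.univ, Measure.restrict_univ,
      ofReal_integral_eq_lintegral_ofReal Integrable.of_finite
        (Filter.Eventually.of_forall fun ω => div_nonneg (hρ0pos ω).le hP00.le)]
  haveI hQfin : IsFiniteMeasure Q :=
    ⟨by rw [hQuniv]; exact ENNReal.ofReal_lt_top⟩
  have hPhatSM : ∀ k, StronglyMeasurable[ℱ k] (Phat k) := fun k => by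
    have : Phat k = fun ω => P1 k ω / P0 k ω := funext fun ω => hPhat k ω
    rw [this]
    exact (Measurable.div (hP1adapt k) (hP0adapt k)).stronglyMeasurable
  -- change of measure for set integrals
  have hkey : ∀ (f : Ω → ℝ) (s : Set Ω), MeasurableSet s →
      ∫ x in s, f x ∂Q = (∫ x in s, ρ0 x * f x ∂P) / P00 := by
    intro f s hs
    have hd : (fun ω => ENNReal.ofReal (ρ0 ω / P00)) =
        fun ω => ((ρ0 ω / P00).toNNReal : ℝ≥0∞) := rfl
    rw [hQ, hd, setIntegral_withDensity_eq_setIntegral_smul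
      (Measurable.of_discrete (f := fun ω => (ρ0 ω / P00).toNNReal)) f hs, ← integral_div]
    refine integral_congr_ae (Filter.Eventually.of_forall fun x => ?_)
    have h0 : (0:ℝ) ≤ ρ0 x / P00 := div_nonneg (hρ0pos x).le hP00.le
    simp only [NNReal.smul_def, Real.coe_toNNReal _ h0, smul_eq_mul]
    field_simp
  have hkey' : ∀ (f : Ω → ℝ) (s : Set Ω), MeasurableSet s →
      ∫ x in s, ρ0 x * f x ∂P = P00 * ∫ x in s, f x ∂Q := by
    intro f s hs
    rw [hkey f s hs]; field_simp
  -- pull-out property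
  have hpull : ∀ k, ∀ s : Set Ω, MeasurableSet[ℱ k] s →
      ∫ x in s, ρ0 x * Phat k x ∂P = ∫ x in s, (P[ρ0|ℱ k]) x * Phat k x ∂P := by
    intro k s hs
    have hmul := condExp_mul_of_stronglyMeasurable_left (μ := P) (hPhatSM k)
      (Integrable.of_finite (f := Phat k * ρ0)) Integrable.of_finite
    calc ∫ x in s, ρ0 x * Phat k x ∂P
        = ∫ x in s, (Phat k * ρ0) x ∂P := by
          refine integral_congr_ae (Filter.Eventually.of_forall fun x => ?_)
          simp [mul_comm]
      _ = ∫ x in s, (P[Phat k * ρ0|ℱ k]) x ∂P :=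
          (setIntegral_condExp (ℱ.le k) Integrable.of_finite hs).symm
      _ = ∫ x in s, (Phat k * (P[ρ0|ℱ k])) x ∂P :=
          integral_congr_ae (ae_restrict_of_ae hmul)
      _ = ∫ x in s, (P[ρ0|ℱ k]) x * Phat k x ∂P := by
          refine integral_congr_ae (Filter.Eventually.of_forall fun x => ?_)
          simp [mul_comm]
  constructor
  · rintro ⟨hint0, hmartP⟩
    -- ρ1 = ρ0 * Phat T a.e.
    have hρ1eq : ρ1 =ᵐ[P] fun ω => ρ0 ω * Phat T ω := by
      have h := hmartP T le_rfl
      rwa [condExp_of_stronglyMeasurable (ℱ.le T) hρ1meas Integrable.of_finite,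
        condExp_of_stronglyMeasurable (ℱ.le T) hρ0meas Integrable.of_finite] at h
    have hQprob : IsProbabilityMeasure Q := by
      refine ⟨?_⟩
      rw [hQuniv, integral_div, hint0, div_self hP00.ne', ENNReal.ofReal_one]
    refine ⟨hQprob, hQ ▸ withDensity_absolutelyContinuous _ _, ?_, ?_, hρ1eq⟩
    · rw [hQ]
      refine withDensity_absolutelyContinuous' Measurable.of_discrete.aemeasurable
        (Filter.Eventually.of_forall fun ω => ?_)
      simp only [ne_eq, ENNReal.ofReal_eq_zero, not_le]
      exact div_pos (hρ0pos ω) hP00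
    · intro k hk
      refine (ae_eq_condExp_of_forall_setIntegral_eq (ℱ.le k) Integrable.of_finite
        (fun s _ _ => Integrable.integrableOn Integrable.of_finite)
        (fun s hs _ => ?_) ((hPhatSM k).aestronglyMeasurable)).symm
      have hsm : MeasurableSet s := ℱ.le k s hs
      rw [hkey _ s hsm, hkey _ s hsm]
      congr 1
      calc ∫ x in s, ρ0 x * Phat k x ∂P
          = ∫ x in s, (P[ρ0|ℱ k]) x * Phat k x ∂P := hpull k s hs
        _ = ∫ x in s, (P[ρ1|ℱ k]) x ∂P :=
            (integral_congr_ae (ae_restrict_of_ae (hmartP k hk))).symm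
        _ = ∫ x in s, ρ1 x ∂P := setIntegral_condExp (ℱ.le k) Integrable.of_finite hs
        _ = ∫ x in s, ρ0 x * Phat T x ∂P :=
            integral_congr_ae (ae_restrict_of_ae hρ1eq)
  · rintro ⟨hQprob, hQP, hPQ, hmartQ, hρ1eq⟩
    constructor
    · have h1 : ENNReal.ofReal (∫ ω, ρ0 ω / P00 ∂P) = 1 := by
        rw [← hQuniv]; exact measure_univ
      have h2 : ∫ ω, ρ0 ω / P00 ∂P = 1 := by
        rw [ENNReal.ofReal_eq_one] at h1; exact h1
      rw [integral_div] at h2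
      field_simp at h2
      exact h2
    · intro k hk
      refine (ae_eq_condExp_of_forall_setIntegral_eq (ℱ.le k) Integrable.of_finite
        (fun s _ _ => Integrable.integrableOn Integrable.of_finite)
        (fun s hs _ => ?_) ?_).symm
      swap
      · exact (stronglyMeasurable_condExp.mul (hPhatSM k)).aestronglyMeasurable
      have hsm : MeasurableSet s := ℱ.le k s hs
      calc ∫ x in s, (P[ρ0|ℱ k]) x * Phat k x ∂P
          = ∫ x in s, ρ0 x * Phat k x ∂P := (hpull k s hs).symm
        _ = P00 * ∫ x in s, Phat k x ∂Q := hkey' _ s hsm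
        _ = P00 * ∫ x in s, (Q[Phat T|ℱ k]) x ∂Q := by
            rw [integral_congr_ae (ae_restrict_of_ae (hmartQ k hk))]
        _ = P00 * ∫ x in s, Phat T x ∂Q := by
            rw [setIntegral_condExp (ℱ.le k) Integrable.of_finite hs]
        _ = ∫ x in s, ρ0 x * Phat T x ∂P := (hkey' _ s hsm).symm
        _ = ∫ x in s, ρ1 x ∂P :=
            (integral_congr_ae (ae_restrict_of_ae hρ1eq)).symm
end

section
/- Let {I(l)}_{l=0}^T be adapted to a finite filtration, let P¹(l) > 0 be adapted, and let (ρ⁰(l), ρ¹(l)) be martingales with ρ⁰(l) > 0 and (1-λ₁) P¹(l) ≤ ρ¹(l)/ρ⁰(l) ≤ (1+λ₀) P¹(l) for all l. Then E[ -Σ_{l=0}^T h(I(l)) P¹(l) ρ⁰(T) + Σ_{l=0}^T I(l) ρ¹(T) ] ≤ 0, where h(z) = (1+λ₀)z for z > 0 and (1-λ₁)z for z ≤ 0. -/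
/-!
Each summand of the integrand involves only quantities known at time `l`, multiplied by the
terminal value of a martingale; conditioning on `ℱ l` replaces `ρ⁰(T)`, `ρ¹(T)` by `ρ⁰(l)`,
`ρ¹(l)`. After this the summand is pointwise nonpositive: writing `ρ¹(l) = R ρ⁰(l)` with
`R ∈ [(1 - λ₁) P¹(l), (1 + λ₀) P¹(l)]`, we have `z R ≤ h(z) P¹(l)` for every `z`, since `h` picks
the upper endpoint for `z > 0` and the lower one for `z ≤ 0`.
-/

open MeasureTheory

namespace MeasureTheory.Martingale

variable {Ω : Type*} {m : MeasurableSpace Ω} {μ : Measure Ω} [IsFiniteMeasure μ]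
  {ℱ : Filtration ℕ m} {ρ : ℕ → Ω → ℝ} {g : Ω → ℝ} {l T : ℕ}

theorem integral_mul_eq_integral_mul_of_le (hρ : Martingale ρ ℱ μ) (hlT : l ≤ T)
    (hg : StronglyMeasurable[ℱ l] g) (hgρ : Integrable (g * ρ T) μ) :
    ∫ ω, g ω * ρ T ω ∂μ = ∫ ω, g ω * ρ l ω ∂μ := by
  have hpull : μ[g * ρ T | ℱ l] =ᵐ[μ] g * ρ l := by
    filter_upwards [condExp_mul_of_stronglyMeasurable_left hg hgρ (hρ.integrable T),
      hρ.condExp_ae_eq hlT] with ω hmul hρω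
    rw [hmul, Pi.mul_apply, hρω, Pi.mul_apply]
  calc ∫ ω, g ω * ρ T ω ∂μ = ∫ ω, (μ[g * ρ T | ℱ l]) ω ∂μ := (integral_condExp (ℱ.le l)).symm
    _ = ∫ ω, g ω * ρ l ω ∂μ := integral_congr_ae hpull

end MeasureTheory.Martingale

theorem mul_le_ite_mul_of_mem_Icc {a b z p R : ℝ} (hR : R ∈ Set.Icc ((1 - b) * p) ((1 + a) * p)) :
    z * R ≤ (if 0 < z then (1 + a) * z else (1 - b) * z) * p := by
  split_ifs with hz
  · nlinarith [hR.2]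
  · nlinarith [hR.1]

theorem mul_le_ite_mul_mul_of_div_mem_Icc {a b z p r₀ r₁ : ℝ} (hr₀ : 0 < r₀)
    (hr : r₁ / r₀ ∈ Set.Icc ((1 - b) * p) ((1 + a) * p)) :
    z * r₁ ≤ (if 0 < z then (1 + a) * z else (1 - b) * z) * p * r₀ := by
  calc z * r₁ = z * (r₁ / r₀) * r₀ := by field_simp
    _ ≤ _ := mul_le_mul_of_nonneg_right (mul_le_ite_mul_of_mem_Icc hr) hr₀.le

theorem stmt9_general {Ω : Type*} [Fintype Ω] {m : MeasurableSpace Ω} [MeasurableSingletonClass Ω]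
    (P : Measure Ω) [IsProbabilityMeasure P]
    (ℱ : Filtration ℕ m) (T : ℕ)
    (lam0 lam1 : ℝ)
    (h : ℝ → ℝ) (hh : ∀ z : ℝ, h z = if 0 < z then (1 + lam0) * z else (1 - lam1) * z)
    (I P1 : ℕ → Ω → ℝ) (hI : StronglyAdapted ℱ I) (hP1 : StronglyAdapted ℱ P1)
    (ρ0 ρ1 : ℕ → Ω → ℝ)
    (hρ0 : Martingale ρ0 ℱ P) (hρ1 : Martingale ρ1 ℱ P)
    (hρ0pos : ∀ l ω, 0 < ρ0 l ω)
    (hratio : ∀ l ω, (1 - lam1) * P1 l ω ≤ ρ1 l ω / ρ0 l ω ∧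
      ρ1 l ω / ρ0 l ω ≤ (1 + lam0) * P1 l ω) :
    ∫ ω, (- ∑ l ∈ Finset.range (T + 1), h (I l ω) * P1 l ω * ρ0 T ω
          + ∑ l ∈ Finset.range (T + 1), I l ω * ρ1 T ω) ∂P ≤ 0 := by
  have hint (f : Ω → ℝ) : Integrable f P := .of_finite
  have hh_meas : Measurable h := by
    rw [funext hh]
    exact Measurable.ite (measurableSet_lt measurable_const measurable_id)
      (measurable_const.mul measurable_id) (measurable_const.mul measurable_id)
  have hcost (l : ℕ) : StronglyMeasurable[ℱ l] fun ω => -(h (I l ω) * P1 l ω) :=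
    ((hh_meas.comp (hI l).measurable).stronglyMeasurable.mul (hP1 l)).neg
  have hsummand (l : ℕ) (hl : l ∈ Finset.range (T + 1)) :
      ∫ ω, (-(h (I l ω) * P1 l ω) * ρ0 T ω + I l ω * ρ1 T ω) ∂P ≤ 0 := by
    have hlT : l ≤ T := Nat.lt_succ_iff.mp (Finset.mem_range.mp hl)
    rw [integral_add (hint _) (hint _),
      hρ0.integral_mul_eq_integral_mul_of_le hlT (hcost l) (hint _),
      hρ1.integral_mul_eq_integral_mul_of_le hlT (hI l) (hint _),
      ← integral_add (hint _) (hint _)]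
    refine integral_nonpos fun ω => ?_
    have := mul_le_ite_mul_mul_of_div_mem_Icc (z := I l ω) (hρ0pos l ω) (hratio l ω)
    rw [← hh] at this
    simp only [Pi.zero_apply]
    linarith
  calc _ = ∫ ω, ∑ l ∈ Finset.range (T + 1),
        (-(h (I l ω) * P1 l ω) * ρ0 T ω + I l ω * ρ1 T ω) ∂P := by
        simp only [Finset.sum_add_distrib, Finset.sum_neg_distrib, neg_mul]
    _ ≤ 0 := by
      rw [integral_finsetSum _ fun l _ => hint _]
      exact Finset.sum_nonpos hsummand

theorem stmt9 {Ω : Type*} [Fintype Ω] {m : MeasurableSpace Ω} [MeasurableSingletonClass Ω]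
    (P : Measure Ω) [IsProbabilityMeasure P]
    (ℱ : Filtration ℕ m) (T : ℕ)
    (lam0 lam1 : ℝ) (hlam0 : 0 < lam0) (hlam1 : 0 < lam1)
    (h : ℝ → ℝ) (hh : ∀ z : ℝ, h z = if 0 < z then (1 + lam0) * z else (1 - lam1) * z)
    (I P1 : ℕ → Ω → ℝ) (hI : StronglyAdapted ℱ I) (hP1 : StronglyAdapted ℱ P1)
    (hP1pos : ∀ l ω, 0 < P1 l ω)
    (ρ0 ρ1 : ℕ → Ω → ℝ)
    (hρ0 : Martingale ρ0 ℱ P) (hρ1 : Martingale ρ1 ℱ P)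
    (hρ0pos : ∀ l ω, 0 < ρ0 l ω)
    (hratio : ∀ l ω, (1 - lam1) * P1 l ω ≤ ρ1 l ω / ρ0 l ω ∧
      ρ1 l ω / ρ0 l ω ≤ (1 + lam0) * P1 l ω) :
    ∫ ω, (- ∑ l ∈ Finset.range (T + 1), h (I l ω) * P1 l ω * ρ0 T ω
          + ∑ l ∈ Finset.range (T + 1), I l ω * ρ1 T ω) ∂P ≤ 0 :=
  stmt9_general P ℱ T lam0 lam1 h hh I P1 hI hP1 ρ0 ρ1 hρ0 hρ1 hρ0pos hratio
end

section
/- Weak duality for portfolio optimization with transaction costs: with bond price ≡ 1, stock price P¹(k) > 0 adapted, initial position (x₀, x₁), any admissible strategy I, and any price system (ρ⁰, ρ¹), and any ξ > 0, the terminal expected utility satisfies E[U(X⁰(T) - h(-X¹(T)) P¹(T))] ≤ E[U*(ξ ρ⁰(T))] + ξ x₁ E[ρ¹(T)] + ξ x₀, where X⁰(T) = x₀ - Σ_{l=0}^T h(I(l)) P¹(l), X¹(T) = x₁ + Σ_{l=0}^T I(l). -/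
/-!
Pointwise Fenchel–Young gives `U(V) ≤ U*(ξ ρ⁰) + ξ ρ⁰ V` for the liquidated wealth `V ≥ 0`, so it
remains to see `E[ρ⁰ V] ≤ x₀ + x₁ E[ρ¹]`. Now `V` is `x₀` minus the cash paid for each trade `I(l)`
and for the final liquidation `-X¹(T)`. Each such trade `z` is `F_l`-measurable, so conditioning
on `F_l` turns `E[ρ¹ z]` and `E[ρ⁰ h(z) P¹(l)]` into `E[z ρ¹(l)]` and `E[h(z) P¹(l) ρ⁰(l)]`, and the
price-system bounds `1 - λ₁ ≤ ρ¹(l) / (ρ⁰(l) P¹(l)) ≤ 1 + λ₀` give `z ρ¹(l) ≤ h(z) P¹(l) ρ⁰(l)`.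
Summing over the trades, whose total is `-x₁`, gives the budget inequality.
-/

open MeasureTheory Filter

noncomputable def tradeCost (lam0 lam1 z : ℝ) : ℝ :=
  if 0 < z then (1 + lam0) * z else (1 - lam1) * z

lemma measurable_tradeCost (lam0 lam1 : ℝ) : Measurable (tradeCost lam0 lam1) :=
  Measurable.ite (measurableSet_lt measurable_const measurable_id)
    (measurable_const.mul measurable_id) (measurable_const.mul measurable_id)

lemma mul_le_tradeCost {lam0 lam1 a : ℝ} (ha : 1 - lam1 ≤ a) (ha' : a ≤ 1 + lam0) (z : ℝ) :
    z * a ≤ tradeCost lam0 lam1 z := by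
  unfold tradeCost
  split_ifs with hz
  · nlinarith
  · nlinarith

lemma le_sSup_sub_mul_add_mul {U : ℝ → ℝ} {x y : ℝ}
    (hbdd : BddAbove {z : ℝ | ∃ x : ℝ, 0 ≤ x ∧ z = U x - x * y}) (hx : 0 ≤ x) :
    U x ≤ sSup {z : ℝ | ∃ x : ℝ, 0 ≤ x ∧ z = U x - x * y} + x * y := by
  linarith [le_csSup hbdd ⟨x, hx, rfl⟩]

section CondExp

variable {Ω : Type*} {𝒢 m : MeasurableSpace Ω} {P : Measure Ω}

lemma integral_mul_eq_integral_mul_condExp (hm : 𝒢 ≤ m) [SigmaFinite (P.trim hm)]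
    {f g : Ω → ℝ} (hf : StronglyMeasurable[𝒢] f) (hfg : Integrable (f * g) P)
    (hg : Integrable g P) :
    ∫ ω, f ω * g ω ∂P = ∫ ω, f ω * P[g|𝒢] ω ∂P :=
  (integral_condExp hm).symm.trans
    (integral_congr_ae (condExp_mul_of_stronglyMeasurable_left hf hfg hg))

variable [Finite Ω] [MeasurableSingletonClass Ω] [IsFiniteMeasure P]

lemma ae_pos_condExp_of_pos (hm : 𝒢 ≤ m) {f : Ω → ℝ} (hf : ∀ ω, 0 < f ω) :
    ∀ᵐ ω ∂P, 0 < P[f|𝒢] ω := by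
  cases isEmpty_or_nonempty Ω
  · exact Eventually.of_forall fun ω => isEmptyElim ω
  obtain ⟨ω₀, hω₀⟩ := Finite.exists_min f
  filter_upwards [condExp_mono (m := 𝒢) (integrable_const (f ω₀)) Integrable.of_finite
    (Eventually.of_forall hω₀)] with ω hω
  rw [condExp_const hm] at hω
  exact (hf ω₀).trans_le hω

lemma integral_mul_le_integral_tradeCost_mul (hm : 𝒢 ≤ m) {lam0 lam1 : ℝ}
    {ρ0 ρ1 p z : Ω → ℝ} (hρ0 : ∀ ω, 0 < ρ0 ω) (hp_pos : ∀ ω, 0 < p ω)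
    (hp : StronglyMeasurable[𝒢] p) (hz : StronglyMeasurable[𝒢] z)
    (hps : ∀ᵐ ω ∂P, 1 - lam1 ≤ P[ρ1|𝒢] ω / (P[ρ0|𝒢] ω * p ω) ∧
      P[ρ1|𝒢] ω / (P[ρ0|𝒢] ω * p ω) ≤ 1 + lam0) :
    ∫ ω, z ω * ρ1 ω ∂P ≤ ∫ ω, tradeCost lam0 lam1 (z ω) * p ω * ρ0 ω ∂P := by
  have hcost : StronglyMeasurable[𝒢] fun ω => tradeCost lam0 lam1 (z ω) * p ω :=
    (((measurable_tradeCost lam0 lam1).comp hz.measurable).mul hp.measurable).stronglyMeasurable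
  have hpt : ∀ᵐ ω ∂P, z ω * P[ρ1|𝒢] ω ≤ tradeCost lam0 lam1 (z ω) * p ω * P[ρ0|𝒢] ω := by
    filter_upwards [hps, ae_pos_condExp_of_pos hm hρ0] with ω ⟨hlo, hhi⟩ hq
    have hqp : 0 < P[ρ0|𝒢] ω * p ω := mul_pos hq (hp_pos ω)
    calc z ω * P[ρ1|𝒢] ω
        = z ω * (P[ρ1|𝒢] ω / (P[ρ0|𝒢] ω * p ω)) * (P[ρ0|𝒢] ω * p ω) := by
          rw [mul_assoc, div_mul_cancel₀ _ hqp.ne']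
      _ ≤ tradeCost lam0 lam1 (z ω) * (P[ρ0|𝒢] ω * p ω) :=
          mul_le_mul_of_nonneg_right (mul_le_tradeCost hlo hhi _) hqp.le
      _ = tradeCost lam0 lam1 (z ω) * p ω * P[ρ0|𝒢] ω := by ring
  calc ∫ ω, z ω * ρ1 ω ∂P
      = ∫ ω, z ω * P[ρ1|𝒢] ω ∂P :=
        integral_mul_eq_integral_mul_condExp hm hz .of_finite .of_finite
    _ ≤ ∫ ω, tradeCost lam0 lam1 (z ω) * p ω * P[ρ0|𝒢] ω ∂P :=
        integral_mono_ae .of_finite .of_finite hpt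
    _ = ∫ ω, tradeCost lam0 lam1 (z ω) * p ω * ρ0 ω ∂P :=
        (integral_mul_eq_integral_mul_condExp hm hcost .of_finite .of_finite).symm

end CondExp

lemma integral_liquidationValue_mul_le {Ω : Type*} [Finite Ω] {m : MeasurableSpace Ω}
    [MeasurableSingletonClass Ω] {P : Measure Ω} [IsFiniteMeasure P] (c : ℝ → ℝ) (n : ℕ)
    (x0 x1 : ℝ) (I p : ℕ → Ω → ℝ) (q ρ0 ρ1 X0 X1 : Ω → ℝ)
    (hX0 : ∀ ω, X0 ω = x0 - ∑ l ∈ Finset.range n, c (I l ω) * p l ω)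
    (hX1 : ∀ ω, X1 ω = x1 + ∑ l ∈ Finset.range n, I l ω)
    (htrade : ∀ l ∈ Finset.range n,
      ∫ ω, I l ω * ρ1 ω ∂P ≤ ∫ ω, c (I l ω) * p l ω * ρ0 ω ∂P)
    (hliq : ∫ ω, -X1 ω * ρ1 ω ∂P ≤ ∫ ω, c (-X1 ω) * q ω * ρ0 ω ∂P) :
    ∫ ω, (X0 ω - c (-X1 ω) * q ω) * ρ0 ω ∂P ≤ x0 * ∫ ω, ρ0 ω ∂P + x1 * ∫ ω, ρ1 ω ∂P := by
  have hvalue : ∫ ω, (X0 ω - c (-X1 ω) * q ω) * ρ0 ω ∂P = x0 * ∫ ω, ρ0 ω ∂P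
      - ∑ l ∈ Finset.range n, ∫ ω, c (I l ω) * p l ω * ρ0 ω ∂P
      - ∫ ω, c (-X1 ω) * q ω * ρ0 ω ∂P := by
    rw [← integral_const_mul, ← integral_finsetSum _ fun _ _ => .of_finite,
      ← integral_sub .of_finite .of_finite, ← integral_sub .of_finite .of_finite]
    congr 1 with ω
    rw [hX0, ← Finset.sum_mul]
    ring
  have hposition : ∑ l ∈ Finset.range n, ∫ ω, I l ω * ρ1 ω ∂P + ∫ ω, -X1 ω * ρ1 ω ∂P
      = -(x1 * ∫ ω, ρ1 ω ∂P) := by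
    rw [← integral_finsetSum _ fun _ _ => .of_finite, ← integral_add .of_finite .of_finite,
      ← integral_const_mul, ← integral_neg]
    congr 1 with ω
    rw [hX1, ← Finset.sum_mul]
    ring
  linarith [Finset.sum_le_sum htrade]

theorem stmt10_general {Ω : Type*} [Fintype Ω] {m : MeasurableSpace Ω} [MeasurableSingletonClass Ω]
    (P : Measure Ω) [IsProbabilityMeasure P]
    (ℱ : Filtration ℕ m) (T : ℕ)
    (lam0 lam1 : ℝ)
    (h : ℝ → ℝ) (hh : ∀ z : ℝ, h z = if 0 < z then (1 + lam0) * z else (1 - lam1) * z)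
    (U : ℝ → ℝ)
    (Ustar : ℝ → ℝ)
    (hUstar : ∀ y : ℝ, 0 < y → Ustar y = sSup {z : ℝ | ∃ x : ℝ, 0 ≤ x ∧ z = U x - x * y})
    (hbdd : ∀ y : ℝ, 0 < y → BddAbove {z : ℝ | ∃ x : ℝ, 0 ≤ x ∧ z = U x - x * y})
    (P1 : ℕ → Ω → ℝ) (hP1 : StronglyAdapted ℱ P1) (hP1pos : ∀ k ω, 0 < P1 k ω)
    (x0 x1 : ℝ)
    (I : ℕ → Ω → ℝ) (hI : StronglyAdapted ℱ I)
    (X0 X1 : ℕ → Ω → ℝ)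
    (hX0 : ∀ k ω, X0 k ω = x0 - ∑ l ∈ Finset.range (k + 1), h (I l ω) * P1 l ω)
    (hX1 : ∀ k ω, X1 k ω = x1 + ∑ l ∈ Finset.range (k + 1), I l ω)
    (hadm : ∀ k ≤ T, ∀ ω, 0 ≤ X0 k ω - h (-(X1 k ω)) * P1 k ω)
    (ρ0 ρ1 : Ω → ℝ) (hρ0pos : ∀ ω, 0 < ρ0 ω)
    (hρ0E : ∫ ω, ρ0 ω ∂P = 1)
    (hps : ∀ k ≤ T, ∀ᵐ ω ∂P,
      1 - lam1 ≤ (P[ρ1 | ℱ k]) ω / ((P[ρ0 | ℱ k]) ω * P1 k ω) ∧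
        (P[ρ1 | ℱ k]) ω / ((P[ρ0 | ℱ k]) ω * P1 k ω) ≤ 1 + lam0)
    (ξ : ℝ) (hξ : 0 < ξ) :
    ∫ ω, U (X0 T ω - h (-(X1 T ω)) * P1 T ω) ∂P
      ≤ ∫ ω, Ustar (ξ * ρ0 ω) ∂P + ξ * x1 * ∫ ω, ρ1 ω ∂P + ξ * x0 := by
  obtain rfl : h = tradeCost lam0 lam1 := funext hh
  have hX1T : StronglyMeasurable[ℱ T] (X1 T) := by
    rw [funext (hX1 T)]
    exact stronglyMeasurable_const.add (Finset.stronglyMeasurable_fun_sum _ fun l hl =>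
      (hI l).mono (ℱ.mono (Finset.mem_range_succ_iff.mp hl)))
  have hbudget := integral_liquidationValue_mul_le (P := P) _ _ x0 x1 I P1 (P1 T) ρ0 ρ1
    (X0 T) (X1 T) (hX0 T) (hX1 T)
    (fun l hl => integral_mul_le_integral_tradeCost_mul (ℱ.le l) hρ0pos (hP1pos l) (hP1 l) (hI l)
      (hps l (Finset.mem_range_succ_iff.mp hl)))
    (integral_mul_le_integral_tradeCost_mul (ℱ.le T) hρ0pos (hP1pos T) (hP1 T) hX1T.neg
      (hps T le_rfl))
  have hfenchel : ∀ ω, U (X0 T ω - tradeCost lam0 lam1 (-X1 T ω) * P1 T ω) ≤ Ustar (ξ * ρ0 ω)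
      + ξ * ((X0 T ω - tradeCost lam0 lam1 (-X1 T ω) * P1 T ω) * ρ0 ω) := fun ω => by
    have hy : 0 < ξ * ρ0 ω := mul_pos hξ (hρ0pos ω)
    rw [hUstar _ hy]
    linarith [le_sSup_sub_mul_add_mul (hbdd _ hy) (hadm T le_rfl ω)]
  calc ∫ ω, U (X0 T ω - tradeCost lam0 lam1 (-X1 T ω) * P1 T ω) ∂P
      ≤ ∫ ω, Ustar (ξ * ρ0 ω) ∂P
        + ξ * ∫ ω, (X0 T ω - tradeCost lam0 lam1 (-X1 T ω) * P1 T ω) * ρ0 ω ∂P := by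
        rw [← integral_const_mul, ← integral_add .of_finite .of_finite]
        exact integral_mono .of_finite .of_finite hfenchel
    _ ≤ ∫ ω, Ustar (ξ * ρ0 ω) ∂P + ξ * (x0 * ∫ ω, ρ0 ω ∂P + x1 * ∫ ω, ρ1 ω ∂P) := by
        gcongr
    _ = ∫ ω, Ustar (ξ * ρ0 ω) ∂P + ξ * x1 * ∫ ω, ρ1 ω ∂P + ξ * x0 := by rw [hρ0E]; ring

theorem stmt10 {Ω : Type*} [Fintype Ω] {m : MeasurableSpace Ω} [MeasurableSingletonClass Ω]
    (P : Measure Ω) [IsProbabilityMeasure P]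
    (ℱ : Filtration ℕ m) (T : ℕ)
    (lam0 lam1 : ℝ) (hlam0 : 0 < lam0) (hlam1 : 0 < lam1)
    (h : ℝ → ℝ) (hh : ∀ z : ℝ, h z = if 0 < z then (1 + lam0) * z else (1 - lam1) * z)
    (U : ℝ → ℝ) (hU : StrictMonoOn U (Set.Ici 0))
    (Ustar : ℝ → ℝ)
    (hUstar : ∀ y : ℝ, 0 < y → Ustar y = sSup {z : ℝ | ∃ x : ℝ, 0 ≤ x ∧ z = U x - x * y})
    (hbdd : ∀ y : ℝ, 0 < y → BddAbove {z : ℝ | ∃ x : ℝ, 0 ≤ x ∧ z = U x - x * y})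
    (P1 : ℕ → Ω → ℝ) (hP1 : StronglyAdapted ℱ P1) (hP1pos : ∀ k ω, 0 < P1 k ω)
    (x0 x1 : ℝ)
    (I : ℕ → Ω → ℝ) (hI : StronglyAdapted ℱ I)
    (X0 X1 : ℕ → Ω → ℝ)
    (hX0 : ∀ k ω, X0 k ω = x0 - ∑ l ∈ Finset.range (k + 1), h (I l ω) * P1 l ω)
    (hX1 : ∀ k ω, X1 k ω = x1 + ∑ l ∈ Finset.range (k + 1), I l ω)
    (hadm : ∀ k ≤ T, ∀ ω, 0 ≤ X0 k ω - h (-(X1 k ω)) * P1 k ω)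
    (ρ0 ρ1 : Ω → ℝ) (hρ0pos : ∀ ω, 0 < ρ0 ω) (hρ1pos : ∀ ω, 0 < ρ1 ω)
    (hρ0E : ∫ ω, ρ0 ω ∂P = 1)
    (hps : ∀ k ≤ T, ∀ᵐ ω ∂P,
      1 - lam1 ≤ (P[ρ1 | ℱ k]) ω / ((P[ρ0 | ℱ k]) ω * P1 k ω) ∧
        (P[ρ1 | ℱ k]) ω / ((P[ρ0 | ℱ k]) ω * P1 k ω) ≤ 1 + lam0)
    (ξ : ℝ) (hξ : 0 < ξ) :
    ∫ ω, U (X0 T ω - h (-(X1 T ω)) * P1 T ω) ∂P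
      ≤ ∫ ω, Ustar (ξ * ρ0 ω) ∂P + ξ * x1 * ∫ ω, ρ1 ω ∂P + ξ * x0 :=
  stmt10_general P ℱ T lam0 lam1 h hh U Ustar hUstar hbdd P1 hP1 hP1pos x0 x1 I hI X0 X1 hX0 hX1
    hadm ρ0 ρ1 hρ0pos hρ0E hps ξ hξ
end

section
/- In the binomial model price system construction of Theorem 3, the resulting processes (ρ⁰(k), ρ¹(k))_{k=0}^T satisfy: (PS1) ρ⁰(k, ω^k) = p ρ⁰(k+1, (ω^k, u)) + (1-p) ρ⁰(k+1, (ω^k, d)) and likewise for ρ¹, and (PS2) (1-λ₁) P¹_k ≤ ρ¹(k)/ρ⁰(k) ≤ (1+λ₀) P¹_k for all k; hence (ρ⁰(T), ρ¹(T)) is a price system. -/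
/-!
The one-step weights `(A_k - A^d)/(A^u - A^d)` and `(A^u - A_k)/(A^u - A^d)` are positive because
`A_k` lies strictly between `A^u` and `A^d`; they sum to one and average `A^u, A^d` to `A_k`.
Since `ρ⁰` is multiplied by the first weight divided by `p` after an up-move and by the second
divided by `1 - p` after a down-move, averaging over the next toss gives (PS1) for `ρ⁰` and for
`ρ¹ = ρ⁰ A`. The ratio `ρ¹/ρ⁰` is `A`, which stays in the bid-ask interval because every `A_{k+1}`
is chosen in it. Integrating out the tosses one at a time gives `E[ρ⁰(T)] = ρ⁰(0) = 1`.
-/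

open Finset Function

section BernoulliProduct

variable {ι : Type*} [Fintype ι] [DecidableEq ι]

lemma sum_update_true_add_update_false {M : Type*} [AddCommMonoid M]
    (h : (ι → Bool) → M) (j : ι) :
    ∑ ω, (h (update ω j true) + h (update ω j false)) = ∑ ω, h ω + ∑ ω, h ω := by
  have hflip : Involutive fun ω : ι → Bool => update ω j (!ω j) := by
    intro ω
    simp
  have hpair : ∀ ω, h (update ω j true) + h (update ω j false)
      = h ω + h (hflip.toPerm _ ω) := by
    intro ω
    have hself := update_eq_self j ω
    rw [Involutive.coe_toPerm]
    cases hω : ω j <;> rw [hω] at hself <;> simp [hself, add_comm]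
  simp only [hpair, sum_add_distrib, Equiv.sum_comp]

def bernoulliWeight (p : ℝ) (ω : ι → Bool) : ℝ := ∏ i, if ω i then p else 1 - p

lemma sum_bernoulliWeight (p : ℝ) : ∑ ω : ι → Bool, bernoulliWeight p ω = 1 := by
  simp [bernoulliWeight, ← Fintype.prod_sum fun _ (b : Bool) => if b then p else 1 - p]

lemma bernoulliWeight_update (p : ℝ) (ω : ι → Bool) (j : ι) (b : Bool) :
    bernoulliWeight p (update ω j b)
      = (if b then p else 1 - p) * ∏ i ∈ univ.erase j, if ω i then p else 1 - p := by
  have hcomp := comp_update (fun b : Bool => if b then p else 1 - p) ω j b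
  simp only [bernoulliWeight]
  rw [← sdiff_singleton_eq_erase, ← prod_update_of_mem (mem_univ j)]
  exact prod_congr rfl fun i _ => congrFun hcomp i

lemma sum_bernoulliWeight_mul_condExp (p : ℝ) (j : ι) (f : (ι → Bool) → ℝ) :
    ∑ ω, bernoulliWeight p ω * (p * f (update ω j true) + (1 - p) * f (update ω j false))
      = ∑ ω, bernoulliWeight p ω * f ω := by
  -- Doubled, both sides are sums over the pairs `update ω j true, update ω j false`, on which the
  -- weight is `p` resp. `1 - p` times a factor not depending on `ω j`.
  set g := fun ω => p * f (update ω j true) + (1 - p) * f (update ω j false) with hg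
  have hg_update : ∀ ω b, g (update ω j b) = g ω := by simp [hg]
  have hdouble : ∑ ω, bernoulliWeight p ω * g ω + ∑ ω, bernoulliWeight p ω * g ω
      = ∑ ω, bernoulliWeight p ω * f ω + ∑ ω, bernoulliWeight p ω * f ω := by
    rw [← sum_update_true_add_update_false (fun ω => bernoulliWeight p ω * g ω) j,
      ← sum_update_true_add_update_false (fun ω => bernoulliWeight p ω * f ω) j]
    refine sum_congr rfl fun ω _ => ?_
    simp only [hg_update, bernoulliWeight_update, if_true, Bool.false_eq_true, if_false]
    simp only [hg]
    ring
  linarith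

lemma sum_bernoulliWeight_mul_eq_of_martingale {T : ℕ} {p : ℝ} {X : ℕ → (Fin T → Bool) → ℝ}
    (hX : ∀ k, ∀ hk : k < T, ∀ ω, X k ω
      = p * X (k + 1) (update ω ⟨k, hk⟩ true) + (1 - p) * X (k + 1) (update ω ⟨k, hk⟩ false)) :
    ∀ k ≤ T, ∑ ω, bernoulliWeight p ω * X k ω = ∑ ω, bernoulliWeight p ω * X 0 ω := by
  intro k
  induction k with
  | zero => simp
  | succ k ih =>
    intro hk
    rw [← sum_bernoulliWeight_mul_condExp p ⟨k, hk⟩, ← ih (Nat.le_of_succ_le hk)]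
    simp only [← hX k hk]

end BernoulliProduct

lemma apply_update_of_eq_ite {ι : Type*} [DecidableEq ι] {Y F G : (ι → Bool) → ℝ} {j : ι}
    (hY : ∀ ω, Y ω = if ω j then F ω else G ω)
    (hF : ∀ ω b, F (update ω j b) = F ω) (hG : ∀ ω b, G (update ω j b) = G ω) (ω : ι → Bool) :
    Y (update ω j true) = F ω ∧ Y (update ω j false) = G ω := by
  simp [hY, hF, hG]

lemma barycentric_weights_pos {a x y : ℝ} (h₁ : min x y < a) (h₂ : a < max x y) :
    0 < (a - y) / (x - y) ∧ 0 < (x - a) / (x - y) := by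
  rcases le_total x y with hxy | hyx
  · rw [min_eq_left hxy] at h₁
    rw [max_eq_right hxy] at h₂
    exact ⟨div_pos_of_neg_of_neg (by linarith) (by linarith),
      div_pos_of_neg_of_neg (by linarith) (by linarith)⟩
  · rw [min_eq_right hyx] at h₁
    rw [max_eq_left hyx] at h₂
    exact ⟨div_pos (by linarith) (by linarith), div_pos (by linarith) (by linarith)⟩

lemma prod_ite_lt_succ {M : Type*} [CommMonoid M] {T k : ℕ} (hk : k < T) (c : Fin T → M) :
    (∏ i : Fin T, if (i : ℕ) < k + 1 then c i else 1)
      = (∏ i : Fin T, if (i : ℕ) < k then c i else 1) * c ⟨k, hk⟩ := by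
  have hfilter : univ.filter (fun i : Fin T => (i : ℕ) < k + 1)
      = insert (⟨k, hk⟩ : Fin T) (univ.filter fun i : Fin T => (i : ℕ) < k) := by
    ext i
    simp only [mem_filter, mem_univ, true_and, mem_insert, Fin.ext_iff]
    omega
  rw [← prod_filter, ← prod_filter, hfilter, prod_insert (by simp), mul_comm]

def IsAdapted {T : ℕ} (X : ℕ → (Fin T → Bool) → ℝ) : Prop :=
  ∀ k (ω ω' : Fin T → Bool), (∀ i : Fin T, (i : ℕ) < k → ω i = ω' i) → X k ω = X k ω'

lemma IsAdapted.apply_update {T k : ℕ} {X : ℕ → (Fin T → Bool) → ℝ} (hX : IsAdapted X)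
    (hk : k < T) (ω : Fin T → Bool) (b : Bool) : X k (update ω ⟨k, hk⟩ b) = X k ω :=
  hX k _ _ fun _ hi => update_of_ne (Fin.ne_of_lt hi) _ _

section Construction

variable {T : ℕ} {p : ℝ} {A Au Ad ρ0 : ℕ → (Fin T → Bool) → ℝ}

lemma rho0_pos (hp : 0 < p) (hq : 0 < 1 - p) (hρ00 : ∀ ω, ρ0 0 ω = 1)
    (hcon1 : ∀ k, k < T → ∀ ω,
      min (Au k ω) (Ad k ω) < A k ω ∧ A k ω < max (Au k ω) (Ad k ω))
    (hrec0 : ∀ k, ∀ hk : k < T, ∀ ω,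
      ρ0 (k + 1) ω = if ω ⟨k, hk⟩
        then ρ0 k ω * ((1 / p) * ((A k ω - Ad k ω) / (Au k ω - Ad k ω)))
        else ρ0 k ω * ((1 / (1 - p)) * ((Au k ω - A k ω) / (Au k ω - Ad k ω)))) :
    ∀ k ≤ T, ∀ ω, 0 < ρ0 k ω := by
  intro k
  induction k with
  | zero => simp [hρ00]
  | succ k ih =>
    intro hk ω
    obtain ⟨hup, hdown⟩ := barycentric_weights_pos (hcon1 k hk ω).1 (hcon1 k hk ω).2
    have hρ := ih (Nat.le_of_succ_le hk) ω
    rw [hrec0 k hk ω]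
    split_ifs
    · exact mul_pos hρ (mul_pos (one_div_pos.mpr hp) hup)
    · exact mul_pos hρ (mul_pos (one_div_pos.mpr hq) hdown)

lemma rho_eq_condExp_succ (hp : p ≠ 0) (hq : 1 - p ≠ 0) {ρ1 : ℕ → (Fin T → Bool) → ℝ}
    (hA : IsAdapted A) (hAu : IsAdapted Au) (hAd : IsAdapted Ad) (hρ0 : IsAdapted ρ0)
    (hρ1 : ∀ k ω, ρ1 k ω = ρ0 k ω * A k ω)
    (hcon1 : ∀ k, k < T → ∀ ω,
      min (Au k ω) (Ad k ω) < A k ω ∧ A k ω < max (Au k ω) (Ad k ω))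
    (hrec0 : ∀ k, ∀ hk : k < T, ∀ ω,
      ρ0 (k + 1) ω = if ω ⟨k, hk⟩
        then ρ0 k ω * ((1 / p) * ((A k ω - Ad k ω) / (Au k ω - Ad k ω)))
        else ρ0 k ω * ((1 / (1 - p)) * ((Au k ω - A k ω) / (Au k ω - Ad k ω))))
    (hrecA : ∀ k, ∀ hk : k < T, ∀ ω,
      A (k + 1) ω = if ω ⟨k, hk⟩ then Au k ω else Ad k ω) :
    ∀ k, ∀ hk : k < T, ∀ ω : Fin T → Bool,
      ρ0 k ω = p * ρ0 (k + 1) (update ω ⟨k, hk⟩ true)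
             + (1 - p) * ρ0 (k + 1) (update ω ⟨k, hk⟩ false) ∧
      ρ1 k ω = p * ρ1 (k + 1) (update ω ⟨k, hk⟩ true)
             + (1 - p) * ρ1 (k + 1) (update ω ⟨k, hk⟩ false) := by
  intro k hk ω
  obtain ⟨hρ0_up, hρ0_down⟩ := apply_update_of_eq_ite (hrec0 k hk)
    (by simp [hA.apply_update, hAu.apply_update, hAd.apply_update, hρ0.apply_update])
    (by simp [hA.apply_update, hAu.apply_update, hAd.apply_update, hρ0.apply_update]) ω
  obtain ⟨hA_up, hA_down⟩ := apply_update_of_eq_ite (hrecA k hk)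
    (hAu.apply_update hk) (hAd.apply_update hk) ω
  have hspread : Au k ω - Ad k ω ≠ 0 := fun h => by
    simpa [h] using (barycentric_weights_pos (hcon1 k hk ω).1 (hcon1 k hk ω).2).1
  simp only [hρ1, hρ0_up, hρ0_down, hA_up, hA_down]
  constructor <;> field_simp <;> ring

lemma A_mem_bidAskSpread {u d lam0 lam1 P10 : ℝ} {S : ℕ → (Fin T → Bool) → ℝ}
    (hS : ∀ k ω, S k ω
      = P10 * ∏ i : Fin T, if (i : ℕ) < k then (if ω i then u else d) else 1)
    (hA0 : ∀ ω, (1 - lam1) * P10 ≤ A 0 ω ∧ A 0 ω ≤ (1 + lam0) * P10)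
    (hcon2 : ∀ k, k < T → ∀ ω,
      (1 - lam1) * S k ω * u ≤ Au k ω ∧ Au k ω ≤ (1 + lam0) * S k ω * u)
    (hcon3 : ∀ k, k < T → ∀ ω,
      (1 - lam1) * S k ω * d ≤ Ad k ω ∧ Ad k ω ≤ (1 + lam0) * S k ω * d)
    (hrecA : ∀ k, ∀ hk : k < T, ∀ ω,
      A (k + 1) ω = if ω ⟨k, hk⟩ then Au k ω else Ad k ω) :
    ∀ k ≤ T, ∀ ω, (1 - lam1) * S k ω ≤ A k ω ∧ A k ω ≤ (1 + lam0) * S k ω := by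
  intro k
  induction k with
  | zero => simpa [hS] using hA0
  | succ k _ =>
    intro hk ω
    have hS_succ : S (k + 1) ω = S k ω * if ω ⟨k, hk⟩ then u else d := by
      rw [hS, hS, prod_ite_lt_succ hk, mul_assoc]
    rw [hrecA k hk ω, hS_succ]
    cases ω ⟨k, hk⟩
    · simpa only [Bool.false_eq_true, if_false, mul_assoc] using hcon3 k hk ω
    · simpa only [if_true, mul_assoc] using hcon2 k hk ω

end Construction

theorem stmt12_general (T : ℕ) (p u d lam0 lam1 P10 : ℝ)
    (hp : 0 < p) (hp1 : p < 1)
    (S : ℕ → (Fin T → Bool) → ℝ)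
    (hS : ∀ k ω, S k ω
      = P10 * ∏ i : Fin T, if (i : ℕ) < k then (if ω i then u else d) else 1)
    (A Au Ad ρ0 ρ1 : ℕ → (Fin T → Bool) → ℝ)
    (hAmeas : ∀ k (ω ω' : Fin T → Bool),
      (∀ i : Fin T, (i : ℕ) < k → ω i = ω' i) → A k ω = A k ω')
    (hAumeas : ∀ k (ω ω' : Fin T → Bool),
      (∀ i : Fin T, (i : ℕ) < k → ω i = ω' i) → Au k ω = Au k ω')
    (hAdmeas : ∀ k (ω ω' : Fin T → Bool),
      (∀ i : Fin T, (i : ℕ) < k → ω i = ω' i) → Ad k ω = Ad k ω')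
    (hρ0meas : ∀ k (ω ω' : Fin T → Bool),
      (∀ i : Fin T, (i : ℕ) < k → ω i = ω' i) → ρ0 k ω = ρ0 k ω')
    (hρ00 : ∀ ω, ρ0 0 ω = 1)
    (hA0 : ∀ ω, (1 - lam1) * P10 ≤ A 0 ω ∧ A 0 ω ≤ (1 + lam0) * P10)
    (hρ1 : ∀ k ω, ρ1 k ω = ρ0 k ω * A k ω)
    (hcon1 : ∀ k, k < T → ∀ ω,
      min (Au k ω) (Ad k ω) < A k ω ∧ A k ω < max (Au k ω) (Ad k ω))
    (hcon2 : ∀ k, k < T → ∀ ω,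
      (1 - lam1) * S k ω * u ≤ Au k ω ∧ Au k ω ≤ (1 + lam0) * S k ω * u)
    (hcon3 : ∀ k, k < T → ∀ ω,
      (1 - lam1) * S k ω * d ≤ Ad k ω ∧ Ad k ω ≤ (1 + lam0) * S k ω * d)
    (hrec0 : ∀ k, ∀ hk : k < T, ∀ ω,
      ρ0 (k + 1) ω = if ω ⟨k, hk⟩
        then ρ0 k ω * ((1 / p) * ((A k ω - Ad k ω) / (Au k ω - Ad k ω)))
        else ρ0 k ω * ((1 / (1 - p)) * ((Au k ω - A k ω) / (Au k ω - Ad k ω))))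
    (hrecA : ∀ k, ∀ hk : k < T, ∀ ω,
      A (k + 1) ω = if ω ⟨k, hk⟩ then Au k ω else Ad k ω) :
    (∀ k, ∀ hk : k < T, ∀ ω : Fin T → Bool,
      ρ0 k ω = p * ρ0 (k + 1) (Function.update ω ⟨k, hk⟩ true)
             + (1 - p) * ρ0 (k + 1) (Function.update ω ⟨k, hk⟩ false) ∧
      ρ1 k ω = p * ρ1 (k + 1) (Function.update ω ⟨k, hk⟩ true)
             + (1 - p) * ρ1 (k + 1) (Function.update ω ⟨k, hk⟩ false)) ∧
    (∀ k, k ≤ T → ∀ ω, (1 - lam1) * S k ω ≤ ρ1 k ω / ρ0 k ω ∧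
      ρ1 k ω / ρ0 k ω ≤ (1 + lam0) * S k ω) ∧
    (∑ ω : Fin T → Bool, (∏ i : Fin T, if ω i then p else 1 - p) * ρ0 T ω) = 1 := by
  have hq : 0 < 1 - p := sub_pos.mpr hp1
  have hPS1 := rho_eq_condExp_succ hp.ne' hq.ne' hAmeas hAumeas hAdmeas hρ0meas hρ1 hcon1 hrec0 hrecA
  refine ⟨hPS1, fun k hk ω => ?_, ?_⟩
  · rw [hρ1, mul_div_cancel_left₀ _ (rho0_pos hp hq hρ00 hcon1 hrec0 k hk ω).ne']
    exact A_mem_bidAskSpread hS hA0 hcon2 hcon3 hrecA k hk ω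
  · have hmart := sum_bernoulliWeight_mul_eq_of_martingale (fun k hk ω => (hPS1 k hk ω).1) T le_rfl
    simp only [hρ00, mul_one, sum_bernoulliWeight] at hmart
    exact hmart

theorem stmt12 (T : ℕ) (p u d lam0 lam1 P10 : ℝ)
    (hp : 0 < p) (hp1 : p < 1) (hd : 0 < d) (hd1 : d < 1) (hu : 1 < u)
    (hlam0 : 0 < lam0) (hlam1 : 0 < lam1) (hP10 : 0 < P10)
    (S : ℕ → (Fin T → Bool) → ℝ)
    (hS : ∀ k ω, S k ω
      = P10 * ∏ i : Fin T, if (i : ℕ) < k then (if ω i then u else d) else 1)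
    (A Au Ad ρ0 ρ1 : ℕ → (Fin T → Bool) → ℝ)
    (hAmeas : ∀ k (ω ω' : Fin T → Bool),
      (∀ i : Fin T, (i : ℕ) < k → ω i = ω' i) → A k ω = A k ω')
    (hAumeas : ∀ k (ω ω' : Fin T → Bool),
      (∀ i : Fin T, (i : ℕ) < k → ω i = ω' i) → Au k ω = Au k ω')
    (hAdmeas : ∀ k (ω ω' : Fin T → Bool),
      (∀ i : Fin T, (i : ℕ) < k → ω i = ω' i) → Ad k ω = Ad k ω')
    (hρ0meas : ∀ k (ω ω' : Fin T → Bool),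
      (∀ i : Fin T, (i : ℕ) < k → ω i = ω' i) → ρ0 k ω = ρ0 k ω')
    (hρ00 : ∀ ω, ρ0 0 ω = 1)
    (hA0 : ∀ ω, (1 - lam1) * P10 ≤ A 0 ω ∧ A 0 ω ≤ (1 + lam0) * P10)
    (hρ1 : ∀ k ω, ρ1 k ω = ρ0 k ω * A k ω)
    (hcon1 : ∀ k, k < T → ∀ ω,
      min (Au k ω) (Ad k ω) < A k ω ∧ A k ω < max (Au k ω) (Ad k ω))
    (hcon2 : ∀ k, k < T → ∀ ω,
      (1 - lam1) * S k ω * u ≤ Au k ω ∧ Au k ω ≤ (1 + lam0) * S k ω * u)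
    (hcon3 : ∀ k, k < T → ∀ ω,
      (1 - lam1) * S k ω * d ≤ Ad k ω ∧ Ad k ω ≤ (1 + lam0) * S k ω * d)
    (hrec0 : ∀ k, ∀ hk : k < T, ∀ ω,
      ρ0 (k + 1) ω = if ω ⟨k, hk⟩
        then ρ0 k ω * ((1 / p) * ((A k ω - Ad k ω) / (Au k ω - Ad k ω)))
        else ρ0 k ω * ((1 / (1 - p)) * ((Au k ω - A k ω) / (Au k ω - Ad k ω))))
    (hrecA : ∀ k, ∀ hk : k < T, ∀ ω,
      A (k + 1) ω = if ω ⟨k, hk⟩ then Au k ω else Ad k ω) :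
    (∀ k, ∀ hk : k < T, ∀ ω : Fin T → Bool,
      ρ0 k ω = p * ρ0 (k + 1) (Function.update ω ⟨k, hk⟩ true)
             + (1 - p) * ρ0 (k + 1) (Function.update ω ⟨k, hk⟩ false) ∧
      ρ1 k ω = p * ρ1 (k + 1) (Function.update ω ⟨k, hk⟩ true)
             + (1 - p) * ρ1 (k + 1) (Function.update ω ⟨k, hk⟩ false)) ∧
    (∀ k, k ≤ T → ∀ ω, (1 - lam1) * S k ω ≤ ρ1 k ω / ρ0 k ω ∧
      ρ1 k ω / ρ0 k ω ≤ (1 + lam0) * S k ω) ∧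
    (∑ ω : Fin T → Bool, (∏ i : Fin T, if ω i then p else 1 - p) * ρ0 T ω) = 1 :=
  stmt12_general T p u d lam0 lam1 P10 hp hp1 S hS A Au Ad ρ0 ρ1 hAmeas hAumeas hAdmeas hρ0meas hρ00
    hA0 hρ1 hcon1 hcon2 hcon3 hrec0 hrecA
end

section
/- Let 0 < p < 1, 0 < d < 1 < u with 1 < p u + (1-p) d, λ₀, λ₁ > 0, and μ < 0. Define V̂_{T-1}(A) = inf{p^{1-μ} α^μ + (1-p)^{1-μ}(1-α)^μ} over 0 < α < 1 for which there exist A^u, A^d with α u A^u + (1-α) d A^d = A and 1-λ₁ ≤ A^u ≤ 1+λ₀, 1-λ₁ ≤ A^d ≤ 1+λ₀. Then for (1-λ₁)(p u + (1-p) d) ≤ A ≤ 1+λ₀ we have V̂_{T-1}(A) = 1, and for 1-λ₁ ≤ A < (1-λ₁)(p u + (1-p) d) we have V̂_{T-1}(A) = p^{1-μ} α_A^μ + (1-p)^{1-μ}(1-α_A)^μ > 1 where α_A = (A - (1-λ₁)d)/((1-λ₁)(u-d)). -/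
noncomputable def fAux (p μ : ℝ) : ℝ → ℝ :=
  fun α => p ^ (1 - μ) * α ^ μ + (1 - p) ^ (1 - μ) * (1 - α) ^ μ

lemma fAux_hasDerivAt (p μ : ℝ) {α : ℝ} (h0 : 0 < α) (h1 : α < 1) :
    HasDerivAt (fAux p μ)
      (μ * (p ^ (1 - μ) * α ^ (μ - 1) - (1 - p) ^ (1 - μ) * (1 - α) ^ (μ - 1))) α := by
  have hA : HasDerivAt (fun x : ℝ => x ^ μ) (μ * α ^ (μ - 1)) α :=
    Real.hasDerivAt_rpow_const (Or.inl h0.ne')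
  have hB0 : HasDerivAt (fun x : ℝ => (1 : ℝ) - x) (-1) α := by
    exact (hasDerivAt_id' α).const_sub 1
  have hB : HasDerivAt (fun x : ℝ => ((1 : ℝ) - x) ^ μ) (μ * (1 - α) ^ (μ - 1) * (-1)) α := by
    have : HasDerivAt (fun y : ℝ => y ^ μ) (μ * (1 - α) ^ (μ - 1)) (1 - α) :=
      Real.hasDerivAt_rpow_const (Or.inl (by linarith : (0:ℝ) < 1 - α).ne')
    exact this.comp α hB0
  have h := (hA.const_mul (p ^ (1 - μ))).add (hB.const_mul ((1 - p) ^ (1 - μ)))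
  refine HasDerivAt.congr_deriv h ?_
  ring

lemma fAux_rw (p μ : ℝ) (hp : 0 < p) {α : ℝ} (h0 : 0 < α) :
    p ^ (1 - μ) * α ^ (μ - 1) = (p / α) ^ (1 - μ) := by
  rw [Real.div_rpow hp.le h0.le, show μ - 1 = -(1 - μ) by ring, Real.rpow_neg h0.le,
    div_eq_mul_inv]

lemma fAux_bracket_pos (p μ : ℝ) (hp : 0 < p) (hp1 : p < 1) (hμ : μ < 0)
    {α : ℝ} (h0 : 0 < α) (hαp : α < p) :
    0 < p ^ (1 - μ) * α ^ (μ - 1) - (1 - p) ^ (1 - μ) * (1 - α) ^ (μ - 1) := by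
  have h1α : (0:ℝ) < 1 - α := by linarith
  have h1p : (0:ℝ) < 1 - p := by linarith
  rw [fAux_rw p μ hp h0, fAux_rw (1 - p) μ h1p h1α, sub_pos]
  apply Real.rpow_lt_rpow (by positivity)
  · rw [div_lt_div_iff₀ h1α h0]
    nlinarith
  · linarith

lemma fAux_bracket_neg (p μ : ℝ) (hp : 0 < p) (hp1 : p < 1) (hμ : μ < 0)
    {α : ℝ} (h1 : α < 1) (hαp : p < α) :
    p ^ (1 - μ) * α ^ (μ - 1) - (1 - p) ^ (1 - μ) * (1 - α) ^ (μ - 1) < 0 := by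
  have h0 : (0:ℝ) < α := hp.trans hαp
  have h1α : (0:ℝ) < 1 - α := by linarith
  have h1p : (0:ℝ) < 1 - p := by linarith
  rw [fAux_rw p μ hp h0, fAux_rw (1 - p) μ h1p h1α, sub_neg]
  apply Real.rpow_lt_rpow (by positivity)
  · rw [div_lt_div_iff₀ h0 h1α]
    nlinarith
  · linarith

lemma fAux_anti (p μ : ℝ) (hp : 0 < p) (hp1 : p < 1) (hμ : μ < 0) :
    StrictAntiOn (fAux p μ) (Set.Ioc 0 p) := by
  apply strictAntiOn_of_deriv_neg (convex_Ioc 0 p)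
  · intro x hx
    exact (fAux_hasDerivAt p μ hx.1 (lt_of_le_of_lt hx.2 hp1)).continuousAt.continuousWithinAt
  · intro x hx
    rw [interior_Ioc] at hx
    rw [(fAux_hasDerivAt p μ hx.1 (hx.2.trans hp1)).deriv]
    exact mul_neg_of_neg_of_pos hμ (fAux_bracket_pos p μ hp hp1 hμ hx.1 hx.2)

lemma fAux_mono (p μ : ℝ) (hp : 0 < p) (hp1 : p < 1) (hμ : μ < 0) :
    StrictMonoOn (fAux p μ) (Set.Ico p 1) := by
  apply strictMonoOn_of_deriv_pos (convex_Ico p 1)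
  · intro x hx
    exact (fAux_hasDerivAt p μ (hp.trans_le hx.1) hx.2).continuousAt.continuousWithinAt
  · intro x hx
    rw [interior_Ico] at hx
    rw [(fAux_hasDerivAt p μ (hp.trans hx.1) hx.2).deriv]
    have := fAux_bracket_neg p μ hp hp1 hμ hx.2 hx.1
    nlinarith

lemma fAux_at_p (p μ : ℝ) (hp : 0 < p) (hp1 : p < 1) : fAux p μ p = 1 := by
  unfold fAux
  rw [← Real.rpow_add hp, ← Real.rpow_add (by linarith : (0:ℝ) < 1 - p),
    show 1 - μ + μ = 1 by ring, Real.rpow_one, Real.rpow_one]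
  ring

lemma fAux_ge_one (p μ : ℝ) (hp : 0 < p) (hp1 : p < 1) (hμ : μ < 0)
    {α : ℝ} (h0 : 0 < α) (h1 : α < 1) : 1 ≤ fAux p μ α := by
  rcases lt_trichotomy α p with h | h | h
  · have := fAux_anti p μ hp hp1 hμ ⟨h0, h.le⟩ ⟨hp, le_refl p⟩ h
    rw [fAux_at_p p μ hp hp1] at this
    exact this.le
  · rw [h, fAux_at_p p μ hp hp1]
  · have := fAux_mono p μ hp hp1 hμ ⟨le_refl p, hp1⟩ ⟨h.le, h1⟩ h
    rw [fAux_at_p p μ hp hp1] at this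
    exact this.le

theorem stmt15 (p u d lam0 lam1 μ : ℝ)
    (hp : 0 < p) (hp1 : p < 1) (hd : 0 < d) (hd1 : d < 1) (hu : 1 < u)
    (hdrift : 1 < p * u + (1 - p) * d)
    (hlam0 : 0 < lam0) (hlam1 : 0 < lam1) (hμ : μ < 0)
    (hcompat : (1 - lam1) * (p * u + (1 - p) * d) ≤ 1 + lam0)
    (V : ℝ → ℝ)
    (hV : ∀ A : ℝ, V A = sInf {v : ℝ | ∃ α Au Ad : ℝ, 0 < α ∧ α < 1 ∧
      α * u * Au + (1 - α) * d * Ad = A ∧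
      1 - lam1 ≤ Au ∧ Au ≤ 1 + lam0 ∧ 1 - lam1 ≤ Ad ∧ Ad ≤ 1 + lam0 ∧
      v = p ^ (1 - μ) * α ^ μ + (1 - p) ^ (1 - μ) * (1 - α) ^ μ}) :
    (∀ A : ℝ, (1 - lam1) * (p * u + (1 - p) * d) ≤ A → A ≤ 1 + lam0 → V A = 1) ∧
    (∀ A : ℝ, 1 - lam1 ≤ A → A < (1 - lam1) * (p * u + (1 - p) * d) →
      V A = p ^ (1 - μ) * ((A - (1 - lam1) * d) / ((1 - lam1) * (u - d))) ^ μ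
          + (1 - p) ^ (1 - μ) * (1 - (A - (1 - lam1) * d) / ((1 - lam1) * (u - d))) ^ μ ∧
      1 < V A) := by
  have hm1 : (1:ℝ) < p * u + (1 - p) * d := hdrift
  have hmpos : (0:ℝ) < p * u + (1 - p) * d := by linarith
  constructor
  · intro A hA1 hA2
    rw [hV A]
    have hlb : ∀ v ∈ {v : ℝ | ∃ α Au Ad : ℝ, 0 < α ∧ α < 1 ∧
        α * u * Au + (1 - α) * d * Ad = A ∧
        1 - lam1 ≤ Au ∧ Au ≤ 1 + lam0 ∧ 1 - lam1 ≤ Ad ∧ Ad ≤ 1 + lam0 ∧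
        v = p ^ (1 - μ) * α ^ μ + (1 - p) ^ (1 - μ) * (1 - α) ^ μ}, (1:ℝ) ≤ v := by
      rintro v ⟨α, Au, Ad, h0, h1, -, -, -, -, -, rfl⟩
      exact fAux_ge_one p μ hp hp1 hμ h0 h1
    have hmem : (1:ℝ) ∈ {v : ℝ | ∃ α Au Ad : ℝ, 0 < α ∧ α < 1 ∧
        α * u * Au + (1 - α) * d * Ad = A ∧
        1 - lam1 ≤ Au ∧ Au ≤ 1 + lam0 ∧ 1 - lam1 ≤ Ad ∧ Ad ≤ 1 + lam0 ∧
        v = p ^ (1 - μ) * α ^ μ + (1 - p) ^ (1 - μ) * (1 - α) ^ μ} := by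
      refine ⟨p, A / (p * u + (1 - p) * d), A / (p * u + (1 - p) * d), hp, hp1, ?_, ?_, ?_, ?_, ?_, ?_⟩
      · field_simp
      · rw [le_div_iff₀ hmpos]; linarith
      · rw [div_le_iff₀ hmpos]; nlinarith
      · rw [le_div_iff₀ hmpos]; linarith
      · rw [div_le_iff₀ hmpos]; nlinarith
      · exact (fAux_at_p p μ hp hp1).symm
    exact le_antisymm (csInf_le ⟨1, hlb⟩ hmem) (le_csInf ⟨1, hmem⟩ hlb)
  · intro A hA1 hA2
    have h1lam : 0 < 1 - lam1 := by
      by_contra h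
      push_neg at h
      nlinarith [mul_nonneg (neg_nonneg.2 h) (by linarith : (0:ℝ) ≤ p * u + (1 - p) * d - 1)]
    have hud : (0:ℝ) < u - d := by linarith
    have hden : (0:ℝ) < (1 - lam1) * (u - d) := mul_pos h1lam hud
    set αA := (A - (1 - lam1) * d) / ((1 - lam1) * (u - d)) with hαA
    have hαA0 : 0 < αA := div_pos (by nlinarith) hden
    have hαAp : αA < p := by
      rw [hαA, div_lt_iff₀ hden]
      nlinarith
    have hαA1 : αA < 1 := hαAp.trans hp1
    have hmem : fAux p μ αA ∈ {v : ℝ | ∃ α Au Ad : ℝ, 0 < α ∧ α < 1 ∧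
        α * u * Au + (1 - α) * d * Ad = A ∧
        1 - lam1 ≤ Au ∧ Au ≤ 1 + lam0 ∧ 1 - lam1 ≤ Ad ∧ Ad ≤ 1 + lam0 ∧
        v = p ^ (1 - μ) * α ^ μ + (1 - p) ^ (1 - μ) * (1 - α) ^ μ} := by
      refine ⟨αA, 1 - lam1, 1 - lam1, hαA0, hαA1, ?_, le_refl _, by linarith, le_refl _, by linarith, rfl⟩
      rw [hαA]
      field_simp
      ring
    have hlb : ∀ v ∈ {v : ℝ | ∃ α Au Ad : ℝ, 0 < α ∧ α < 1 ∧
        α * u * Au + (1 - α) * d * Ad = A ∧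
        1 - lam1 ≤ Au ∧ Au ≤ 1 + lam0 ∧ 1 - lam1 ≤ Ad ∧ Ad ≤ 1 + lam0 ∧
        v = p ^ (1 - μ) * α ^ μ + (1 - p) ^ (1 - μ) * (1 - α) ^ μ}, fAux p μ αA ≤ v := by
      rintro v ⟨α, Au, Ad, h0, h1, heq, hAu1, hAu2, hAd1, hAd2, rfl⟩
      have hle : α ≤ αA := by
        rw [hαA, le_div_iff₀ hden]
        nlinarith [mul_le_mul_of_nonneg_left hAu1 (by positivity : (0:ℝ) ≤ α * u),
          mul_le_mul_of_nonneg_left hAd1 (mul_nonneg (by linarith : (0:ℝ) ≤ 1 - α) hd.le)]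
      rcases eq_or_lt_of_le hle with h | h
      · rw [h]; exact le_of_eq rfl
      · exact (fAux_anti p μ hp hp1 hμ ⟨h0, (hle.trans hαAp.le)⟩ ⟨hαA0, hαAp.le⟩ h).le
    have hVA : V A = fAux p μ αA := by
      rw [hV A]
      exact le_antisymm (csInf_le ⟨fAux p μ αA, hlb⟩ hmem) (le_csInf ⟨_, hmem⟩ hlb)
    have hgt : 1 < fAux p μ αA := by
      have := fAux_anti p μ hp hp1 hμ ⟨hαA0, hαAp.le⟩ ⟨hp, le_refl p⟩ hαAp
      rwa [fAux_at_p p μ hp hp1] at this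
    exact ⟨hVA, hVA ▸ hgt⟩
end

section
/- Under the dynamic programming recursion V̂_k = H V̂_{k+1} with terminal condition V̂_T ≡ 1, where H is the operator (Hg)(A) = inf{p^{1-μ} α^μ g(A^u) + (1-p)^{1-μ}(1-α)^μ g(A^d) : 0 < α < 1, A^u, A^d ∈ [1-λ₁, 1+λ₀], α u A^u + (1-α) d A^d = A}, if 1 < p u + (1-p) d then V̂_k(A) = 1 for all A with (1-λ₁)(p u + (1-p) d)^{T-k} ≤ A ≤ 1+λ₀, and V̂_k(A) ≥ 1 for all A ∈ [1-λ₁, 1+λ₀]. Furthermore V̂_k(A) ≥ V̂_{k+1}(A) for every k and A. -/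
open scoped ENNReal
open Set

/-- Bernoulli for negative exponents: `1 + μ (t - 1) ≤ t ^ μ` for `t > 0`, `μ ≤ 0`. -/
lemma bern_neg {t μ : ℝ} (ht : 0 < t) (hμ : μ ≤ 0) : 1 + μ * (t - 1) ≤ t ^ μ := by
  have h1 : Real.log t ≤ t - 1 := Real.log_le_sub_one_of_pos ht
  have h2 : μ * (t - 1) ≤ μ * Real.log t := mul_le_mul_of_nonpos_left h1 hμ
  have h3 : μ * Real.log t + 1 ≤ Real.exp (μ * Real.log t) := Real.add_one_le_exp _
  rw [Real.rpow_def_of_pos ht, mul_comm (Real.log t) μ]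
  linarith

lemma key_ineq {p μ α : ℝ} (hp : 0 < p) (hp1 : p < 1) (hμ : μ < 0)
    (hα : 0 < α) (hα1 : α < 1) :
    1 ≤ p ^ (1 - μ) * α ^ μ + (1 - p) ^ (1 - μ) * (1 - α) ^ μ := by
  have hq : 0 < 1 - p := by linarith
  have hβ : 0 < 1 - α := by linarith
  have hpμ : (0:ℝ) < p ^ μ := Real.rpow_pos_of_pos hp μ
  have hqμ : (0:ℝ) < (1-p) ^ μ := Real.rpow_pos_of_pos hq μ
  have e1 : p ^ (1 - μ) * α ^ μ = p * (α / p) ^ μ := by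
    rw [Real.div_rpow hα.le hp.le, Real.rpow_sub hp, Real.rpow_one]
    field_simp
  have e2 : (1 - p) ^ (1 - μ) * (1 - α) ^ μ = (1 - p) * ((1 - α) / (1 - p)) ^ μ := by
    rw [Real.div_rpow hβ.le hq.le, Real.rpow_sub hq, Real.rpow_one]
    field_simp
  have b1 : 1 + μ * (α / p - 1) ≤ (α / p) ^ μ := bern_neg (by positivity) hμ.le
  have b2 : 1 + μ * ((1 - α) / (1 - p) - 1) ≤ ((1 - α) / (1 - p)) ^ μ := bern_neg (by positivity) hμ.le
  have c1 : p * (1 + μ * (α / p - 1)) ≤ p * (α / p) ^ μ := by nlinarith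
  have c2 : (1 - p) * (1 + μ * ((1 - α) / (1 - p) - 1)) ≤ (1 - p) * ((1 - α) / (1 - p)) ^ μ := by
    nlinarith
  have hsum : p * (1 + μ * (α / p - 1)) + (1 - p) * (1 + μ * ((1 - α) / (1 - p) - 1)) = 1 := by
    field_simp
    ring
  rw [e1, e2]
  linarith

theorem stmt17 (T : ℕ) (p u d lam0 lam1 μ : ℝ)
    (hp : 0 < p) (hp1 : p < 1) (hd : 0 < d) (hd1 : d < 1) (hu : 1 < u)
    (hlam0 : 0 < lam0) (hlam1 : 0 < lam1) (hlam1lt : lam1 < 1) (hμ : μ < 0)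
    (hdrift : 1 < p * u + (1 - p) * d)
    (V : ℕ → ℝ → ℝ≥0∞)
    (hVT : ∀ A : ℝ, V T A = 1)
    (hVrec : ∀ k, k < T → ∀ A : ℝ, V k A = sInf {v : ℝ≥0∞ | ∃ α Au Ad : ℝ,
      0 < α ∧ α < 1 ∧
      Au ∈ Icc (1 - lam1) (1 + lam0) ∧ Ad ∈ Icc (1 - lam1) (1 + lam0) ∧
      α * u * Au + (1 - α) * d * Ad = A ∧
      v = ENNReal.ofReal (p ^ (1 - μ) * α ^ μ) * V (k + 1) Au
        + ENNReal.ofReal ((1 - p) ^ (1 - μ) * (1 - α) ^ μ) * V (k + 1) Ad}) :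
    (∀ k ≤ T, ∀ A : ℝ,
      (1 - lam1) * (p * u + (1 - p) * d) ^ (T - k) ≤ A → A ≤ 1 + lam0 → V k A = 1) ∧
    (∀ k ≤ T, ∀ A ∈ Icc (1 - lam1) (1 + lam0), 1 ≤ V k A) ∧
    (∀ k, k < T → ∀ A ∈ Icc (1 - lam1) (1 + lam0), V (k + 1) A ≤ V k A) := by
  set m : ℝ := p * u + (1 - p) * d with hm
  have hm1 : 1 < m := hdrift
  have hm0 : 0 < m := by linarith
  have hq : 0 < 1 - p := by linarith
  -- coefficients are positive
  have hc1 : ∀ α : ℝ, 0 < α → 0 < p ^ (1 - μ) * α ^ μ := fun α hα =>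
    mul_pos (Real.rpow_pos_of_pos hp _) (Real.rpow_pos_of_pos hα _)
  have hc2 : ∀ α : ℝ, α < 1 → 0 < (1 - p) ^ (1 - μ) * (1 - α) ^ μ := fun α hα =>
    mul_pos (Real.rpow_pos_of_pos hq _) (Real.rpow_pos_of_pos (by linarith) _)
  -- Claim 2 for all A
  have claim2 : ∀ n : ℕ, ∀ k, k ≤ T → T - k = n → ∀ A : ℝ, 1 ≤ V k A := by
    intro n
    induction n with
    | zero =>
      intro k hk h A
      have : k = T := by omega
      subst this
      rw [hVT]
    | succ n ih =>
      intro k hk h A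
      have hkT : k < T := by omega
      rw [hVrec k hkT A]
      refine le_sInf ?_
      rintro v ⟨α, Au, Ad, hα0, hα1, hAu, hAd, -, rfl⟩
      have h1 : 1 ≤ V (k + 1) Au := ih (k + 1) (by omega) (by omega) Au
      have h2 : 1 ≤ V (k + 1) Ad := ih (k + 1) (by omega) (by omega) Ad
      have hk1 := key_ineq hp hp1 hμ hα0 hα1
      calc (1 : ℝ≥0∞) = ENNReal.ofReal 1 := by simp
        _ ≤ ENNReal.ofReal (p ^ (1 - μ) * α ^ μ + (1 - p) ^ (1 - μ) * (1 - α) ^ μ) :=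
            ENNReal.ofReal_le_ofReal hk1
        _ = ENNReal.ofReal (p ^ (1 - μ) * α ^ μ)
            + ENNReal.ofReal ((1 - p) ^ (1 - μ) * (1 - α) ^ μ) :=
            ENNReal.ofReal_add (hc1 α hα0).le (hc2 α hα1).le
        _ ≤ ENNReal.ofReal (p ^ (1 - μ) * α ^ μ) * V (k + 1) Au
            + ENNReal.ofReal ((1 - p) ^ (1 - μ) * (1 - α) ^ μ) * V (k + 1) Ad := by
            gcongr
            · exact le_mul_of_one_le_right zero_le h1
            · exact le_mul_of_one_le_right zero_le h2
  -- Claim 1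
  have claim1 : ∀ n : ℕ, ∀ k, k ≤ T → T - k = n → ∀ A : ℝ,
      (1 - lam1) * m ^ (T - k) ≤ A → A ≤ 1 + lam0 → V k A = 1 := by
    intro n
    induction n with
    | zero =>
      intro k hk h A _ _
      have : k = T := by omega
      subst this
      exact hVT A
    | succ n ih =>
      intro k hk h A hAlo hAhi
      have hkT : k < T := by omega
      have hlam1' : (0:ℝ) < 1 - lam1 := by linarith
      have hpowle : (1:ℝ) ≤ m ^ n := one_le_pow₀ hm1.le
      have hTk : T - k = n + 1 := h
      have hTk1 : T - (k + 1) = n := by omega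
      rw [hTk] at hAlo
      -- A / m bounds
      have hAlo' : (1 - lam1) * m ^ n ≤ A / m := by
        rw [le_div_iff₀ hm0]
        calc (1 - lam1) * m ^ n * m = (1 - lam1) * m ^ (n + 1) := by ring
          _ ≤ A := hAlo
      have hAm_lo : 1 - lam1 ≤ A / m := le_trans (by nlinarith) hAlo'
      have hAm_hi : A / m ≤ 1 + lam0 := by
        rw [div_le_iff₀ hm0]; nlinarith
      have hVk1 : V (k + 1) (A / m) = 1 := by
        refine ih (k + 1) (by omega) (by omega) (A / m) ?_ hAm_hi
        rwa [hTk1]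
      refine le_antisymm ?_ (claim2 (n + 1) k hk h A)
      rw [hVrec k hkT A]
      refine sInf_le ?_
      refine ⟨p, A / m, A / m, hp, hp1, ⟨hAm_lo, hAm_hi⟩, ⟨hAm_lo, hAm_hi⟩, ?_, ?_⟩
      · field_simp
        ring
      · rw [hVk1, mul_one, mul_one,
          ← ENNReal.ofReal_add (hc1 p hp).le (hc2 p hp1).le]
        have e : p ^ (1 - μ) * p ^ μ + (1 - p) ^ (1 - μ) * (1 - p) ^ μ = 1 := by
          rw [← Real.rpow_add hp, ← Real.rpow_add hq]
          norm_num
        rw [e, ENNReal.ofReal_one]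
  -- Claim 3 (monotonicity), for all A
  have mono : ∀ n : ℕ, ∀ k, k < T → T - k = n + 1 → ∀ A : ℝ, V (k + 1) A ≤ V k A := by
    intro n
    induction n with
    | zero =>
      intro k hk h A
      have : k + 1 = T := by omega
      rw [this, hVT]
      exact claim2 1 k hk.le (by omega) A
    | succ n ih =>
      intro k hk h A
      have hk1T : k + 1 < T := by omega
      rw [hVrec k hk A, hVrec (k + 1) hk1T A]
      refine le_sInf ?_
      rintro v ⟨α, Au, Ad, hα0, hα1, hAu, hAd, heq, rfl⟩
      refine le_trans (sInf_le ⟨α, Au, Ad, hα0, hα1, hAu, hAd, heq, rfl⟩) ?_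
      gcongr
      · exact ih (k + 1) hk1T (by omega) Au
      · exact ih (k + 1) hk1T (by omega) Ad
  refine ⟨fun k hk A hlo hhi => claim1 (T - k) k hk rfl A hlo hhi,
    fun k hk A _ => claim2 (T - k) k hk rfl A,
    fun k hk A _ => mono (T - k - 1) k hk (by omega) A⟩
end

section
/- Optimality of buy-and-hold: in the binomial model with bond price 1, transaction costs λ₀, λ₁ > 0, power utility U(x) = (1/γ)x^γ with 0 < γ < 1, initial stock price S, initial position (x₀, x₁) with x₁ ≤ 0 and x₀ - h(-x₁)S > 0, drift condition 1 < p u + (1-p) d, and (1-λ₁)(p u + (1-p) d)^T ≤ 1+λ₀, the optimal expected utility equals (1/γ)(x₀ + x₁ S (1+λ₀))^γ, and this value is achieved by the buy-and-hold strategy that buys -x₁ shares at time 0, at cost (1+λ₀)(-x₁)S, and never trades again. -/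
open Finset

/-- Transaction cost function: buying `z > 0` shares costs `(1+λ₀)z`,
selling costs `(1-λ₁)z`. -/
noncomputable def hcost (lam0 lam1 z : ℝ) : ℝ :=
  if 0 < z then (1 + lam0) * z else (1 - lam1) * z

/-- Binomial stock price at time `k`. -/
noncomputable def priceBin (T : ℕ) (S u d : ℝ) (k : ℕ) (ω : Fin T → Bool) : ℝ :=
  S * ∏ i : Fin T, if (i : ℕ) < k then (if ω i then u else d) else 1

/-- Probability weight of a path. -/
noncomputable def weightBin (T : ℕ) (p : ℝ) (ω : Fin T → Bool) : ℝ :=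
  ∏ i : Fin T, if ω i then p else 1 - p

/-- A strategy is adapted: `I k` depends only on the first `k` coordinates. -/
def AdaptedBin (T : ℕ) (I : ℕ → (Fin T → Bool) → ℝ) : Prop :=
  ∀ k (ω ω' : Fin T → Bool), (∀ i : Fin T, (i : ℕ) < k → ω i = ω' i) → I k ω = I k ω'

/-- Bond holdings. -/
noncomputable def Xbond (T : ℕ) (S u d lam0 lam1 x0 : ℝ)
    (I : ℕ → (Fin T → Bool) → ℝ) (k : ℕ) (ω : Fin T → Bool) : ℝ :=
  x0 - ∑ l ∈ range (k + 1), hcost lam0 lam1 (I l ω) * priceBin T S u d l ω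

/-- Stock holdings. -/
noncomputable def Xstock (T : ℕ) (x1 : ℝ)
    (I : ℕ → (Fin T → Bool) → ℝ) (k : ℕ) (ω : Fin T → Bool) : ℝ :=
  x1 + ∑ l ∈ range (k + 1), I l ω

/-- Admissibility: nonnegative liquidated wealth at all times. -/
def AdmissibleBin (T : ℕ) (S u d lam0 lam1 x0 x1 : ℝ)
    (I : ℕ → (Fin T → Bool) → ℝ) : Prop :=
  ∀ k ≤ T, ∀ ω : Fin T → Bool,
    0 ≤ Xbond T S u d lam0 lam1 x0 I k ω
      - hcost lam0 lam1 (-(Xstock T x1 I k ω)) * priceBin T S u d k ω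

/-- Expected power utility of terminal liquidated wealth. -/
noncomputable def expUtil (T : ℕ) (S u d lam0 lam1 x0 x1 p γ : ℝ)
    (I : ℕ → (Fin T → Bool) → ℝ) : ℝ :=
  ∑ ω : Fin T → Bool, weightBin T p ω *
    ((1 / γ) * (Xbond T S u d lam0 lam1 x0 I T ω
      - hcost lam0 lam1 (-(Xstock T x1 I T ω)) * priceBin T S u d T ω) ^ γ)

-- auxiliary lemmas

lemma weight_sum_one (T : ℕ) (p : ℝ) : ∑ ω : Fin T → Bool, weightBin T p ω = 1 := by
  unfold weightBin
  rw [← Fintype.prod_sum (fun (i : Fin T) (b : Bool) => if b then p else 1 - p)]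
  simp

lemma weight_nonneg (T : ℕ) {p : ℝ} (hp : 0 ≤ p) (hp1 : p ≤ 1) (ω : Fin T → Bool) :
    0 ≤ weightBin T p ω := by
  unfold weightBin
  exact Finset.prod_nonneg fun i _ => by split_ifs <;> linarith

lemma weight_split (T : ℕ) (p : ℝ) (j : Fin T) (ω : Fin T → Bool) :
    weightBin T p ω = (if ω j then p else 1 - p) *
      ∏ i ∈ univ.erase j, (if ω i then p else 1 - p) := by
  unfold weightBin
  exact (Finset.mul_prod_erase univ _ (mem_univ j)).symm

lemma weight_update (T : ℕ) (p : ℝ) (j : Fin T) (ω : Fin T → Bool) (c : Bool) :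
    weightBin T p (Function.update ω j c) = (if c then p else 1 - p) *
      ∏ i ∈ univ.erase j, (if ω i then p else 1 - p) := by
  rw [weight_split T p j]
  simp only [Function.update_self]
  congr 1
  refine Finset.prod_congr rfl fun i hi => ?_
  rw [Function.update_of_ne (mem_erase.mp hi).1]

-- key conditional-expectation lemma
lemma key_sum (T : ℕ) {p : ℝ} (j : Fin T) (g : Bool → ℝ) (F : (Fin T → Bool) → ℝ)
    (hF : ∀ ω c, F (Function.update ω j c) = F ω) :
    ∑ ω : Fin T → Bool, weightBin T p ω * (g (ω j) * F ω)
      = (p * g true + (1 - p) * g false) *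
        ∑ ω : Fin T → Bool, weightBin T p ω * F ω := by
  have split : ∀ H : (Fin T → Bool) → ℝ,
      ∑ ω : Fin T → Bool, H ω
        = ∑ ω ∈ univ.filter (fun ω : Fin T → Bool => ω j = true),
            (H ω + H (Function.update ω j false)) := by
    intro H
    rw [← Finset.sum_filter_add_sum_filter_not univ (fun ω : Fin T → Bool => ω j = true) H,
      Finset.sum_add_distrib]
    congr 1
    refine Finset.sum_nbij' (fun ω => Function.update ω j true)
      (fun ω => Function.update ω j false) ?_ ?_ ?_ ?_ ?_
    · intro ω hω; simp
    · intro ω hω; simp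
    · intro ω hω
      simp only [mem_filter, Bool.not_eq_true] at hω
      funext i
      rcases eq_or_ne i j with rfl | h
      · simp [hω.2]
      · simp [Function.update_of_ne h]
    · intro ω hω
      simp only [mem_filter] at hω
      funext i
      rcases eq_or_ne i j with rfl | h
      · simp [hω.2]
      · simp [Function.update_of_ne h]
    · intro ω hω
      simp only [mem_filter, Bool.not_eq_true] at hω
      congr 1
      funext i
      rcases eq_or_ne i j with rfl | h
      · simp [Function.update_self, hω.2]
      · simp [Function.update_of_ne h]
  rw [split, split (fun ω => weightBin T p ω * F ω), Finset.mul_sum]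
  refine Finset.sum_congr rfl fun ω hω => ?_
  simp only [mem_filter] at hω
  have hωj : ω j = true := hω.2
  rw [weight_update T p j ω false, weight_split T p j ω, hF ω false]
  simp only [hωj, Function.update_self, if_true, Bool.false_eq_true, if_false]
  ring

lemma priceBin_zero (T : ℕ) (S u d : ℝ) (ω : Fin T → Bool) :
    priceBin T S u d 0 ω = S := by
  unfold priceBin; simp

lemma priceBin_pos (T : ℕ) {S u d : ℝ} (hS : 0 < S) (hu : 0 < u) (hd : 0 < d)
    (k : ℕ) (ω : Fin T → Bool) : 0 < priceBin T S u d k ω := by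
  unfold priceBin
  apply mul_pos hS
  exact Finset.prod_pos fun i _ => by split_ifs <;> [skip; skip; exact one_pos] <;> assumption

lemma priceBin_succ (T : ℕ) (S u d : ℝ) {k : ℕ} (hk : k < T) (ω : Fin T → Bool) :
    priceBin T S u d (k + 1) ω
      = priceBin T S u d k ω * (if ω ⟨k, hk⟩ then u else d) := by
  unfold priceBin
  have : ∀ i : Fin T,
      (if (i : ℕ) < k + 1 then (if ω i then u else d) else 1)
        = (if (i : ℕ) < k then (if ω i then u else d) else 1)
          * (if i = ⟨k, hk⟩ then (if ω i then u else d) else 1) := by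
    intro i
    rcases lt_trichotomy (i : ℕ) k with h | h | h
    · have h1 : (i : ℕ) < k + 1 := by omega
      have h2 : i ≠ ⟨k, hk⟩ := by intro he; rw [he] at h; simp at h
      simp [h, h1, h2]
    · have h2 : i = ⟨k, hk⟩ := Fin.ext h
      simp [h2, Nat.lt_succ_self]
    · have h1 : ¬ (i : ℕ) < k + 1 := by omega
      have h2 : i ≠ ⟨k, hk⟩ := by intro he; rw [he] at h; simp at h
      have h3 : ¬ (i : ℕ) < k := by omega
      simp [h1, h2, h3]
  rw [Finset.prod_congr rfl fun i _ => this i, Finset.prod_mul_distrib,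
    Finset.prod_ite_eq' univ (⟨k, hk⟩ : Fin T)]
  simp [mul_assoc]

lemma priceBin_update (T : ℕ) (S u d : ℝ) {k : ℕ} (j : Fin T) (hj : ¬ (j : ℕ) < k)
    (ω : Fin T → Bool) (c : Bool) :
    priceBin T S u d k (Function.update ω j c) = priceBin T S u d k ω := by
  unfold priceBin
  congr 1
  refine Finset.prod_congr rfl fun i _ => ?_
  rcases eq_or_ne i j with rfl | h
  · simp [hj]
  · rw [Function.update_of_ne h]

lemma hcost_bound {lam0 lam1 c z : ℝ} (h1 : 1 - lam1 ≤ c) (h2 : c ≤ 1 + lam0) :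
    z * c ≤ hcost lam0 lam1 z := by
  unfold hcost
  split_ifs with h
  · nlinarith
  · push_neg at h; nlinarith

lemma hcost_zero (lam0 lam1 : ℝ) : hcost lam0 lam1 0 = 0 := by
  unfold hcost; simp

theorem stmt18 (T : ℕ) (S u d lam0 lam1 x0 x1 p γ : ℝ)
    (hp : 0 < p) (hp1 : p < 1) (hd : 0 < d) (hd1 : d < 1) (hu : 1 < u)
    (hlam0 : 0 < lam0) (hlam1 : 0 < lam1) (hγ0 : 0 < γ) (hγ1 : γ < 1) (hS : 0 < S)
    (hx1 : x1 ≤ 0) (hwealth : 0 < x0 - hcost lam0 lam1 (-x1) * S)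
    (hdrift : 1 < p * u + (1 - p) * d)
    (hcomp : (1 - lam1) * (p * u + (1 - p) * d) ^ T ≤ 1 + lam0) :
    AdaptedBin T (fun l _ => if l = 0 then -x1 else 0) ∧
    AdmissibleBin T S u d lam0 lam1 x0 x1 (fun l _ => if l = 0 then -x1 else 0) ∧
    expUtil T S u d lam0 lam1 x0 x1 p γ (fun l _ => if l = 0 then -x1 else 0)
      = (1 / γ) * (x0 + x1 * S * (1 + lam0)) ^ γ ∧
    (∀ I : ℕ → (Fin T → Bool) → ℝ, AdaptedBin T I →
      AdmissibleBin T S u d lam0 lam1 x0 x1 I →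
      expUtil T S u d lam0 lam1 x0 x1 p γ I
        ≤ (1 / γ) * (x0 + x1 * S * (1 + lam0)) ^ γ) := by
  classical
  have hu0 : (0:ℝ) < u := lt_trans zero_lt_one hu
  set m : ℝ := p * u + (1 - p) * d with hm_def
  have hm1 : 1 < m := hdrift
  have hm0 : 0 < m := lt_trans zero_lt_one hm1
  have hKeq : x0 - hcost lam0 lam1 (-x1) * S = x0 + x1 * S * (1 + lam0) := by
    unfold hcost
    rcases lt_or_ge 0 (-x1) with h | h
    · rw [if_pos h]; ring
    · have hx10 : x1 = 0 := le_antisymm hx1 (by linarith)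
      rw [if_neg (not_lt.mpr h)]; subst hx10; ring
  set K : ℝ := x0 + x1 * S * (1 + lam0) with hKdef
  have hKpos : 0 < K := hKeq ▸ hwealth
  have hw0 : ∀ ω : Fin T → Bool, 0 ≤ weightBin T p ω := weight_nonneg T hp.le hp1.le
  -- buy-and-hold facts
  have hBbond : ∀ k (ω : Fin T → Bool),
      Xbond T S u d lam0 lam1 x0 (fun l _ => if l = 0 then -x1 else 0) k ω
        = x0 - hcost lam0 lam1 (-x1) * S := by
    intro k ω
    unfold Xbond
    congr 1
    rw [Finset.sum_eq_single_of_mem 0 (Finset.mem_range.mpr (Nat.succ_pos k))]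
    · simp [priceBin_zero]
    · intro l _ hl; simp [hl, hcost_zero]
  have hBstock : ∀ k (ω : Fin T → Bool),
      Xstock T x1 (fun l _ => if l = 0 then -x1 else 0) k ω = 0 := by
    intro k ω
    unfold Xstock
    rw [Finset.sum_eq_single_of_mem 0 (Finset.mem_range.mpr (Nat.succ_pos k))]
    · simp
    · intro l _ hl; simp [hl]
  refine ⟨fun k ω ω' _ => rfl, ?_, ?_, ?_⟩
  · -- admissibility of buy-and-hold
    intro k hk ω
    rw [hBbond, hBstock]
    simp only [neg_zero, hcost_zero, zero_mul, sub_zero]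
    linarith
  · -- value of buy-and-hold
    unfold expUtil
    have : ∀ ω : Fin T → Bool,
        weightBin T p ω * ((1 / γ) *
          (Xbond T S u d lam0 lam1 x0 (fun l _ => if l = 0 then -x1 else 0) T ω
            - hcost lam0 lam1 (-(Xstock T x1 (fun l _ => if l = 0 then -x1 else 0) T ω))
              * priceBin T S u d T ω) ^ γ)
          = weightBin T p ω * ((1 / γ) * K ^ γ) := by
      intro ω
      rw [hBbond, hBstock]
      simp only [neg_zero, hcost_zero, zero_mul, sub_zero]
      rw [hKeq]
    rw [Finset.sum_congr rfl fun ω _ => this ω, ← Finset.sum_mul, weight_sum_one, one_mul]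
  · -- optimality
    intro I hAd hAdm
    set c : ℕ → ℝ := fun k => (1 + lam0) / m ^ k with hc
    have hcle : ∀ k, c k ≤ 1 + lam0 := by
      intro k
      rw [hc]
      rw [div_le_iff₀ (pow_pos hm0 k)]
      have h1 : (1:ℝ) ≤ m ^ k := one_le_pow₀ hm1.le
      nlinarith
    have hcge : ∀ k, k ≤ T → 1 - lam1 ≤ c k := by
      intro k hk
      rw [hc, le_div_iff₀ (pow_pos hm0 k)]
      have h1 : m ^ k ≤ m ^ T := pow_le_pow_right₀ hm1.le hk
      have h2 : (0:ℝ) < m ^ k := pow_pos hm0 k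
      rcases le_or_gt 0 (1 - lam1) with h | h
      · nlinarith
      · nlinarith
    have hmart : ∀ k, p * (c (k+1) * u) + (1 - p) * (c (k+1) * d) = c k := by
      intro k
      have h1 : p * (c (k+1) * u) + (1 - p) * (c (k+1) * d) = c (k+1) * m := by
        rw [hm_def]; ring
      rw [h1, hc]
      have h2 : (m:ℝ) ^ k ≠ 0 := (pow_pos hm0 k).ne'
      have h3 : (m:ℝ) ≠ 0 := hm0.ne'
      show (1 + lam0) / m ^ (k + 1) * m = (1 + lam0) / m ^ k
      rw [pow_succ]
      field_simp
    -- shadow wealth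
    set Wt : ℕ → (Fin T → Bool) → ℝ := fun k ω =>
      Xbond T S u d lam0 lam1 x0 I k ω
        + Xstock T x1 I k ω * (c k * priceBin T S u d k ω) with hWt
    have main : ∀ k, k ≤ T → ∑ ω : Fin T → Bool, weightBin T p ω * Wt k ω ≤ K := by
      intro k
      induction k with
      | zero =>
        intro _
        have hpt : ∀ ω : Fin T → Bool, Wt 0 ω ≤ K := by
          intro ω
          rw [hWt]
          simp only
          unfold Xbond Xstock
          rw [Finset.sum_range_one, Finset.sum_range_one, priceBin_zero]
          have hc0 : c 0 = 1 + lam0 := by rw [hc]; simp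
          rw [hc0, hKdef]
          have hb := hcost_bound (z := I 0 ω) (lam0 := lam0) (lam1 := lam1)
            (c := 1 + lam0) (by linarith) le_rfl
          nlinarith [mul_le_mul_of_nonneg_right hb hS.le]
        calc ∑ ω : Fin T → Bool, weightBin T p ω * Wt 0 ω
            ≤ ∑ ω : Fin T → Bool, weightBin T p ω * K :=
              Finset.sum_le_sum fun ω _ => mul_le_mul_of_nonneg_left (hpt ω) (hw0 ω)
          _ = K := by rw [← Finset.sum_mul, weight_sum_one, one_mul]
      | succ k ih =>
        intro hk1
        have hkT : k < T := lt_of_lt_of_le (Nat.lt_succ_self k) hk1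
        set j : Fin T := ⟨k, hkT⟩ with hjdef
        have decomp : ∀ ω : Fin T → Bool, Wt (k+1) ω = Wt k ω
            + (I (k+1) ω * c (k+1) - hcost lam0 lam1 (I (k+1) ω)) * priceBin T S u d (k+1) ω
            + (c (k+1) * (if ω j then u else d) - c k)
              * (Xstock T x1 I k ω * priceBin T S u d k ω) := by
          intro ω
          rw [hWt]
          simp only
          unfold Xbond Xstock
          rw [Finset.sum_range_succ (fun l => hcost lam0 lam1 (I l ω) * priceBin T S u d l ω),
            Finset.sum_range_succ (fun l => I l ω), priceBin_succ T S u d hkT ω]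
          ring
        have trade_le : ∑ ω : Fin T → Bool, weightBin T p ω *
            ((I (k+1) ω * c (k+1) - hcost lam0 lam1 (I (k+1) ω))
              * priceBin T S u d (k+1) ω) ≤ 0 := by
          apply Finset.sum_nonpos
          intro ω _
          apply mul_nonpos_of_nonneg_of_nonpos (hw0 ω)
          apply mul_nonpos_of_nonpos_of_nonneg
          · have hb := hcost_bound (z := I (k+1) ω) (hcge (k+1) hk1) (hcle (k+1))
            linarith
          · exact (priceBin_pos T hS hu0 hd (k+1) ω).le
        have mart_eq : ∑ ω : Fin T → Bool, weightBin T p ω *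
            ((c (k+1) * (if ω j then u else d) - c k)
              * (Xstock T x1 I k ω * priceBin T S u d k ω)) = 0 := by
          have hF : ∀ (ω : Fin T → Bool) (cc : Bool),
              Xstock T x1 I k (Function.update ω j cc)
                * priceBin T S u d k (Function.update ω j cc)
                = Xstock T x1 I k ω * priceBin T S u d k ω := by
            intro ω cc
            rw [priceBin_update T S u d j (by simp [hjdef]) ω cc]
            congr 1
            unfold Xstock
            congr 1
            refine Finset.sum_congr rfl fun l hl => ?_
            have hlk : l ≤ k := Nat.lt_succ_iff.mp (Finset.mem_range.mp hl)
            apply hAd l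
            intro i hi
            have hij : i ≠ j := by
              intro he
              rw [he] at hi
              simp [hjdef] at hi
              omega
            rw [Function.update_of_ne hij]
          have hk2 := key_sum T (p := p) j
            (fun b => c (k+1) * (if b then u else d) - c k)
            (fun ω => Xstock T x1 I k ω * priceBin T S u d k ω) hF
          rw [hk2]
          have : p * (c (k+1) * (if true then u else d) - c k)
              + (1 - p) * (c (k+1) * (if false then u else d) - c k) = 0 := by
            simp only [if_true, Bool.false_eq_true, if_false]
            have := hmart k
            linarith
          rw [this, zero_mul]
        calc ∑ ω : Fin T → Bool, weightBin T p ω * Wt (k+1) ω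
            = (∑ ω : Fin T → Bool, weightBin T p ω * Wt k ω)
              + (∑ ω : Fin T → Bool, weightBin T p ω *
                  ((I (k+1) ω * c (k+1) - hcost lam0 lam1 (I (k+1) ω))
                    * priceBin T S u d (k+1) ω))
              + (∑ ω : Fin T → Bool, weightBin T p ω *
                  ((c (k+1) * (if ω j then u else d) - c k)
                    * (Xstock T x1 I k ω * priceBin T S u d k ω))) := by
              rw [← Finset.sum_add_distrib, ← Finset.sum_add_distrib]
              exact Finset.sum_congr rfl fun ω _ => by rw [decomp ω]; ring
          _ ≤ K + 0 + 0 := add_le_add (add_le_add (ih (le_of_lt hkT)) trade_le) mart_eq.le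
          _ = K := by ring
    -- conclusion
    set W : (Fin T → Bool) → ℝ := fun ω =>
      Xbond T S u d lam0 lam1 x0 I T ω
        - hcost lam0 lam1 (-(Xstock T x1 I T ω)) * priceBin T S u d T ω with hWdef
    have hWnn : ∀ ω, 0 ≤ W ω := fun ω => hAdm T le_rfl ω
    have hWle : ∀ ω, W ω ≤ Wt T ω := by
      intro ω
      rw [hWdef, hWt]
      simp only
      have hP := (priceBin_pos T hS hu0 hd T ω).le
      have hb := hcost_bound (z := -(Xstock T x1 I T ω)) (hcge T le_rfl) (hcle T)
      nlinarith [mul_le_mul_of_nonneg_right hb hP]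
    have hsum_le : ∑ ω : Fin T → Bool, weightBin T p ω * W ω ≤ K :=
      le_trans (Finset.sum_le_sum fun ω _ =>
        mul_le_mul_of_nonneg_left (hWle ω) (hw0 ω)) (main T le_rfl)
    have hsum_nn : 0 ≤ ∑ ω : Fin T → Bool, weightBin T p ω * W ω :=
      Finset.sum_nonneg fun ω _ => mul_nonneg (hw0 ω) (hWnn ω)
    have jensen : ∑ ω : Fin T → Bool, weightBin T p ω * (W ω) ^ γ
        ≤ (∑ ω : Fin T → Bool, weightBin T p ω * W ω) ^ γ := by
      have hconc := Real.concaveOn_rpow hγ0.le hγ1.le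
      have := hconc.le_map_sum (t := univ) (w := fun ω : Fin T → Bool => weightBin T p ω)
        (p := W) (fun ω _ => hw0 ω) (weight_sum_one T p) (fun ω _ => hWnn ω)
      simpa [smul_eq_mul] using this
    have hexp : expUtil T S u d lam0 lam1 x0 x1 p γ I
        = ∑ ω : Fin T → Bool, weightBin T p ω * ((1 / γ) * (W ω) ^ γ) := rfl
    rw [hexp]
    calc ∑ ω : Fin T → Bool, weightBin T p ω * ((1 / γ) * (W ω) ^ γ)
        = (1 / γ) * ∑ ω : Fin T → Bool, weightBin T p ω * (W ω) ^ γ := by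
          rw [Finset.mul_sum]
          exact Finset.sum_congr rfl fun ω _ => by ring
      _ ≤ (1 / γ) * (∑ ω : Fin T → Bool, weightBin T p ω * W ω) ^ γ :=
          mul_le_mul_of_nonneg_left jensen (by positivity)
      _ ≤ (1 / γ) * K ^ γ :=
          mul_le_mul_of_nonneg_left
            (Real.rpow_le_rpow hsum_nn hsum_le hγ0.le) (by positivity)
end
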